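/- arXiv:1303.2283 — 9 statements merged into one kernel-verified Lean document; each statement's English description precedes it below -/
import Mathlib

section
/- Let q be a prime power, β ∈ F_{q^n}, c_0,...,c_{n-1} ∈ F_q, and α = Σ_{i=0}^{n-1} c_i β^{q^i}. Define a_i = Tr_{q^n|q}(α·α^{q^i}) and b_i = Tr_{q^n|q}(β·β^{q^i}) for 0 ≤ i ≤ n-1. Then the polynomials f_a(x) = Σ a_i x^i, f_b(x) = Σ b_i x^i, f_c(x) = Σ c_i x^i satisfy f_a(x) ≡ f_b(x)·f_c(x)·f_c*(x) (mod x^n - 1), where f_c*(x) = Σ_{i=0}^{n-1} c_i x^{n-i} mod (x^n-1) is the reciprocal polynomial of f_c. -/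
open Polynomial Finset

/-- Cyclic convolution: multiplication in `F[x]/(x^n - 1)` on coefficient vectors. -/
def cconv (n : ℕ) [NeZero n] {F : Type*} [CommRing F] (a b : ZMod n → F) : ZMod n → F :=
  fun k => ∑ i : ZMod n, a i * b (k - i)

/-- Reciprocal polynomial `g*(z) = Σ b_i z^{n-i}` on coefficient vectors. -/
def cstar (n : ℕ) {F : Type*} (a : ZMod n → F) : ZMod n → F := fun i => a (-i)

/-- The polynomial `Σ_{i=0}^{n-1} a_i x^i` attached to a coefficient vector. -/
noncomputable def toPoly (n : ℕ) [NeZero n] {F : Type*} [CommRing F] (a : ZMod n → F) : Polynomial F :=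
  ∑ i : Fin n, Polynomial.C (a ((i : ℕ) : ZMod n)) * Polynomial.X ^ (i : ℕ)

theorem stmt_3 (n : ℕ) [NeZero n] (F K : Type*) [Field F] [Fintype F] [Field K]
    [Algebra F K] [FiniteDimensional F K] (hn : Module.finrank F K = n)
    (β : K) (c : ZMod n → F) (α : K)
    (hα : α = ∑ i : ZMod n, c i • β ^ (Fintype.card F) ^ i.val)
    (a b : ZMod n → F)
    (ha : ∀ i : ZMod n, a i = Algebra.trace F K (α * α ^ (Fintype.card F) ^ i.val))
    (hb : ∀ i : ZMod n, b i = Algebra.trace F K (β * β ^ (Fintype.card F) ^ i.val)) :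
    a = cconv n (cconv n b c) (cstar n c) := by
  classical
  have hn0 : 0 < n := Nat.pos_of_ne_zero (NeZero.ne n)
  set q := Fintype.card F with hqdef
  haveI : Finite K := Module.finite_of_finite F
  haveI : Fintype K := Fintype.ofFinite K
  obtain ⟨p, hpF⟩ := CharP.exists F
  have hprime : p.Prime := (CharP.char_is_prime F p)
  haveI : Fact p.Prime := ⟨hprime⟩
  haveI hpK : CharP K p :=
    charP_of_injective_algebraMap (algebraMap F K).injective p
  obtain ⟨s, -, hs⟩ := FiniteField.card F p
  -- the Frobenius-power ring homs
  set φ : ℕ → (K →+* K) := fun m => iterateFrobenius K p ((s : ℕ) * m) with hφdef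
  have hφ : ∀ (m : ℕ) (x : K), φ m x = x ^ q ^ m := by
    intro m x
    have hq' : q = p ^ (s : ℕ) := hs
    rw [hφdef]
    simp only [iterateFrobenius_def]
    rw [hq', ← pow_mul]
  -- scalars are fixed
  have hfix : ∀ (d : F) (m : ℕ), (algebraMap F K d) ^ q ^ m = algebraMap F K d := by
    intro d m
    rw [← map_pow, FiniteField.pow_card_pow]
  have hsmul : ∀ (d : F) (m : ℕ) (x : K), (d • x) ^ q ^ m = d • x ^ q ^ m := by
    intro d m x
    rw [Algebra.smul_def, Algebra.smul_def, ← hφ, ← hφ, map_mul, hφ, hφ, hfix]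
  -- x ^ q ^ n = x
  have hcardK : Fintype.card K = q ^ n := by
    rw [Module.card_eq_pow_finrank (K := F) (V := K), hn]
  have hKn : ∀ x : K, x ^ q ^ n = x := by
    intro x; rw [← hcardK, FiniteField.pow_card]
  have hKnk : ∀ (k : ℕ) (x : K), x ^ (q ^ n) ^ k = x := by
    intro k
    induction k with
    | zero => simp
    | succ k ih => intro x; rw [pow_succ, pow_mul, ih, hKn]
  have hmod : ∀ (t : ℕ) (x : K), x ^ q ^ t = x ^ q ^ (t % n) := by
    intro t x
    conv_lhs => rw [← Nat.div_add_mod t n]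
    rw [pow_add, pow_mul, pow_mul, hKnk]
  -- B m = β ^ q ^ m.val
  set B : ZMod n → K := fun m => β ^ q ^ m.val with hBdef
  have hB : ∀ t : ℕ, β ^ q ^ t = B (t : ZMod n) := by
    intro t
    rw [hBdef]; simp only []
    rw [ZMod.val_natCast, ← hmod]
  have hBpow : ∀ (m : ZMod n) (t : ℕ), (B m) ^ q ^ t = B (m + t) := by
    intro m t
    rw [hBdef]; simp only []
    rw [← pow_mul, ← pow_add, hB]
    congr 1
    push_cast [ZMod.natCast_val, ZMod.cast_id]
    ring
  -- trace invariance under Frobenius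
  obtain ⟨e, he⟩ : ∃ e : K ≃ₐ[F] K, ∀ x : K, e x = x ^ q := by
    refine ⟨AlgEquiv.ofBijective (AlgHom.mk' (φ 1) fun d x => by rw [hφ, hsmul, ← hφ])
      ((Finite.injective_iff_bijective).1 (φ 1).injective), fun x => ?_⟩
    show φ 1 x = x ^ q
    rw [hφ, pow_one]
  have htr1 : ∀ x : K, Algebra.trace F K (x ^ q) = Algebra.trace F K x := by
    intro x
    rw [← he, Algebra.trace_eq_of_algEquiv]
  have htr : ∀ (m : ℕ) (x : K), Algebra.trace F K (x ^ q ^ m) = Algebra.trace F K x := by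
    intro m
    induction m with
    | zero => simp
    | succ m ih =>
      intro x
      rw [pow_succ, pow_mul, htr1, ih]
  -- key trace identity
  have htrB : ∀ i j : ZMod n, Algebra.trace F K (B i * B j) = b (j - i) := by
    intro i j
    have h1 : B i * B j = (β * B (j - i)) ^ q ^ i.val := by
      rw [← hφ, map_mul, hφ, hφ, hBpow]
      have h2 : j - i + ((i.val : ℕ) : ZMod n) = j := by
        rw [ZMod.natCast_val, ZMod.cast_id]; ring
      rw [h2]
    rw [h1, htr, hb]
  -- expansion of α
  have hαB : α = ∑ i : ZMod n, c i • B i := by rw [hα]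
  have hαpow : ∀ k : ZMod n, α ^ q ^ k.val = ∑ j : ZMod n, c j • B (j + k) := by
    intro k
    rw [hαB, ← hφ, map_sum]
    refine Finset.sum_congr rfl fun j _ => ?_
    rw [hφ, hsmul, hBpow]
    congr 2
    rw [ZMod.natCast_val, ZMod.cast_id]
  -- compute a k
  funext k
  rw [ha k, hαpow k, hαB, Finset.sum_mul_sum]
  simp_rw [smul_mul_smul_comm, map_sum, LinearMap.map_smul_of_tower, smul_eq_mul]
  simp_rw [htrB]
  have hds : ∀ f : ZMod n → ZMod n → F,
      (∑ i : ZMod n, ∑ j : ZMod n, f i j) = ∑ x : ZMod n × ZMod n, f x.1 x.2 :=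
    fun f => (Fintype.sum_prod_type (f := fun x : ZMod n × ZMod n => f x.1 x.2)).symm
  simp only [cconv, cstar, neg_sub]
  simp_rw [Finset.sum_mul]
  rw [hds (fun i j => c i * c j * b (j + k - i)),
      hds (fun i l => b l * c (i - l) * c (i - k))]
  refine Fintype.sum_equiv
    (Equiv.mk (fun x : ZMod n × ZMod n => (x.2 + k, x.2 + k - x.1))
      (fun y : ZMod n × ZMod n => (y.1 - y.2, y.1 - k))
      (by rintro ⟨x1, x2⟩; simp only [Prod.mk.injEq]; constructor <;> ring
      ) (by rintro ⟨y1, y2⟩; simp only [Prod.mk.injEq]; constructor <;> ring)) _ _ ?_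
  rintro ⟨x1, x2⟩
  simp only [Equiv.coe_fn_mk]
  have h1 : x2 + k - (x2 + k - x1) = x1 := by ring
  have h2 : x2 + k - k = x2 := by ring
  rw [h1, h2]
  ring
end

section
/- Let n be even and h(z) = Σ_{i=0}^{n-1} a_i z^i ∈ F_2[z]/(z^n-1). If h(z) = g(z)·g*(z) in F_2[z]/(z^n-1) for some g, then h is symmetric (a_i = a_{n-i} for 1 ≤ i ≤ n-1) and a_{n/2} = 0. -/
open Polynomial Finset

theorem stmt_4 (n : ℕ) [NeZero n] (hn : Even n)
    (a g : ZMod n → ZMod 2)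
    (hfac : a = cconv n g (cstar n g)) :
    (∀ i : ZMod n, a i = a (-i)) ∧ a ((n / 2 : ℕ) : ZMod n) = 0 := by
  subst hfac
  constructor
  · intro k
    simp only [cconv, cstar]
    refine Fintype.sum_equiv (Equiv.subRight k) _ _ ?_
    intro i
    simp only [Equiv.subRight_apply]
    have e1 : -(k - i) = i - k := by ring
    have e2 : -(-k - (i - k)) = i := by ring
    rw [e1, e2, mul_comm]
  · set c : ZMod n := ((n / 2 : ℕ) : ZMod n) with hc
    have h2 : n ≥ 2 := by
      rcases hn with ⟨m, rfl⟩
      have : m ≠ 0 := by rintro rfl; exact (NeZero.ne 0) rfl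
      omega
    have hnn : n / 2 + n / 2 = n := by rcases hn with ⟨m, hm⟩; omega
    have hcc : c + c = 0 := by
      rw [hc, ← Nat.cast_add, hnn, ZMod.natCast_self]
    have hc0 : c ≠ 0 := by
      rw [hc, Ne, ZMod.natCast_eq_zero_iff]
      intro h
      have := Nat.le_of_dvd (by omega) h
      omega
    simp only [cconv, cstar]
    apply Finset.sum_involution (fun i _ => i - c)
    · intro i _
      have e1 : -(c - i) = i - c := by ring
      have e2 : -(c - (i - c)) = i := by
        rw [show -(c - (i - c)) = i - (c + c) by ring, hcc, sub_zero]
      rw [e1, e2, mul_comm (g (i - c))]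
      exact CharTwo.add_self_eq_zero _
    · intro i _ _ h
      exact hc0 (sub_eq_self.mp h)
    · intro i _; exact Finset.mem_univ _
    · intro i _
      rw [sub_sub, hcc, sub_zero]
end

section
/- Let n be divisible by 4 and h(z) = Σ_{i=0}^{n-1} a_i z^i ∈ F_2[z]/(z^n-1) with a_0 = 1. If h(z) = g(z)·g*(z) in F_2[z]/(z^n-1) for some g ∈ F_2[z]/(z^n-1), then Σ_{1 ≤ i ≤ n/2 - 1, i odd} a_i = 0. -/
open Polynomial Finset

/-!
Write `a_k = Σ_i g_i g_{i-k}`, and let `E` and `O` be the sums of the coefficients of `g` at even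
and at odd positions (parity in `ZMod n` makes sense since `2 ∣ n`). Every product `g_p g_q` with
`p` even and `q` odd occurs exactly once in `Σ_{j odd, j < n/2} a_j`: the difference `p - q` is
odd, so it is `j` or `-j` for exactly one odd `j < n/2`, because `n/2` is even. Hence that sum is
`E * O` over any commutative ring. Over `𝔽₂`, `a_0 = Σ_i g_i² = E + O`, so `a_0 = 1` forces one of
`E`, `O` to vanish.
-/

theorem cconv_cstar_apply {n : ℕ} [NeZero n] {F : Type*} [CommRing F] (g : ZMod n → F)
    (k : ZMod n) : cconv n g (cstar n g) k = ∑ i, g i * g (i - k) := by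
  simp only [cconv, cstar, neg_sub]

namespace ZMod

variable {n : ℕ}

theorem cast_natCast_eq_one_iff_odd (h2 : 2 ∣ n) (k : ℕ) :
    ((k : ZMod n).cast : ZMod 2) = 1 ↔ Odd k := by
  rw [cast_natCast h2, natCast_eq_one_iff_odd]

variable [NeZero n]

theorem sum_cast_zero_add_sum_cast_one {M : Type*} [AddCommMonoid M] (f : ZMod n → M) :
    ∑ p with (p.cast : ZMod 2) = 0, f p + ∑ p with (p.cast : ZMod 2) = 1, f p = ∑ p, f p := by
  rw [← sum_filter_add_sum_filter_not univ fun p : ZMod n => (p.cast : ZMod 2) = 0]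
  congr 1
  refine sum_congr (filter_congr fun p _ => ?_) fun _ _ => rfl
  generalize (p.cast : ZMod 2) = x
  revert x
  decide

theorem exists_odd_lt_half_eq_or_neg_eq (h4 : 4 ∣ n) {d : ZMod n} (hd : Odd d.val) :
    ∃ j : ℕ, (1 ≤ j ∧ j < n / 2) ∧ Odd j ∧ ((j : ZMod n) = d ∨ -(j : ZMod n) = d) := by
  have hd0 : d ≠ 0 := by rintro rfl; simp at hd
  have hlt := val_lt d
  obtain ⟨m, rfl⟩ := h4
  rw [Nat.odd_iff] at hd
  -- `d.val ≠ 2 * m` since `d.val` is odd; otherwise `-d` is the representative below `n / 2`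
  by_cases hhalf : d.val < 4 * m / 2
  · exact ⟨d.val, ⟨by omega, hhalf⟩, Nat.odd_iff.2 hd, .inl (natCast_zmod_val d)⟩
  · refine ⟨(-d).val, ⟨?_, ?_⟩, ?_, .inr (by rw [natCast_zmod_val, neg_neg])⟩ <;>
      rw [neg_val, if_neg hd0]
    · omega
    · omega
    · rw [Nat.odd_iff]; omega

theorem sum_cast_eq_one_eq_sum_add_neg (h4 : 4 ∣ n) {M : Type*}
    [AddCommMonoid M] (f : ZMod n → M) :
    ∑ d with (d.cast : ZMod 2) = 1, f d = ∑ j ∈ Ico 1 (n / 2) with Odd j, (f j + f (-j)) := by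
  have h2 : 2 ∣ n := dvd_trans (by norm_num) h4
  set T := {j ∈ Ico 1 (n / 2) | Odd j}
  have hT {j : ℕ} : j ∈ T ↔ (1 ≤ j ∧ j < n / 2) ∧ Odd j := by simp [T]
  have hval {j : ℕ} (hj : j ∈ T) : (j : ZMod n).val = j := val_natCast_of_lt (by grind)
  have hinj : Set.InjOn (fun j : ℕ => (j : ZMod n)) T := fun j hj j' hj' h => by
    rw [← hval hj, ← hval hj']; exact congrArg ZMod.val h
  have hinj' : Set.InjOn (fun j : ℕ => -(j : ZMod n)) T := fun j hj j' hj' h =>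
    hinj hj hj' (neg_inj.1 h)
  have hdisj :
      Disjoint (T.image fun j : ℕ => (j : ZMod n)) (T.image fun j : ℕ => -(j : ZMod n)) := by
    simp only [disjoint_left, mem_image, not_exists, not_and]
    rintro _ ⟨j, hj, rfl⟩ j' hj' h
    have hdvd : n ∣ (j + j' : ℕ) := by
      rw [← natCast_eq_zero_iff, Nat.cast_add, ← h, neg_add_cancel]
    have := Nat.le_of_dvd (by grind) hdvd
    grind
  rw [sum_add_distrib, ← sum_image (g := fun j : ℕ => (j : ZMod n)) hinj,
    ← sum_image (g := fun j : ℕ => -(j : ZMod n)) hinj', ← sum_union hdisj]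
  congr 1
  ext d
  simp only [mem_filter, mem_univ, true_and, mem_union, mem_image]
  constructor
  · intro hd
    rw [← natCast_zmod_val d, cast_natCast_eq_one_iff_odd h2] at hd
    obtain ⟨j, hj, hodd, hjd | hjd⟩ := exists_odd_lt_half_eq_or_neg_eq h4 hd
    exacts [.inl ⟨j, hT.2 ⟨hj, hodd⟩, hjd⟩, .inr ⟨j, hT.2 ⟨hj, hodd⟩, hjd⟩]
  · rintro (⟨j, hj, rfl⟩ | ⟨j, hj, rfl⟩)
    · exact (cast_natCast_eq_one_iff_odd h2 j).2 (hT.1 hj).2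
    · rw [cast_neg h2, (cast_natCast_eq_one_iff_odd h2 j).2 (hT.1 hj).2]
      rfl

variable {R : Type*} [CommSemiring R] (h2 : 2 ∣ n) (g : ZMod n → R)
include h2

theorem sum_cast_zero_mul_sum_cast_one :
    (∑ p with (p.cast : ZMod 2) = 0, g p) * ∑ q with (q.cast : ZMod 2) = 1, g q =
      ∑ d with (d.cast : ZMod 2) = 1, ∑ p with (p.cast : ZMod 2) = 0, g p * g (p - d) := by
  rw [sum_comm, sum_mul]
  refine sum_congr rfl fun p hp => ?_
  rw [mul_sum]
  refine (sum_equiv (Equiv.subLeft p) (fun d => ?_) fun d _ => rfl).symm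
  simp only [mem_filter, mem_univ, true_and, Equiv.subLeft_apply, cast_sub h2,
    (mem_filter.1 hp).2, zero_sub, CharTwo.neg_eq]

theorem sum_mul_sub_eq_of_cast_eq_one {d : ZMod n} (hd : (d.cast : ZMod 2) = 1) :
    ∑ i, g i * g (i - d) =
      ∑ p with (p.cast : ZMod 2) = 0, g p * g (p - d) +
        ∑ p with (p.cast : ZMod 2) = 0, g p * g (p - -d) := by
  rw [← sum_cast_zero_add_sum_cast_one]
  congr 1
  refine (sum_equiv (Equiv.addRight d) (fun p => ?_) fun p _ => ?_).symm
  · simp only [mem_filter, mem_univ, true_and, Equiv.coe_addRight, cast_add h2, hd]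
    generalize (p.cast : ZMod 2) = x
    revert x
    decide
  · rw [Equiv.coe_addRight, sub_neg_eq_add, add_sub_cancel_right, mul_comm]

end ZMod

open ZMod in
theorem sum_cconv_cstar_odd_eq_mul {n : ℕ} [NeZero n] (h4 : 4 ∣ n) {F : Type*} [CommRing F]
    (g : ZMod n → F) :
    ∑ j ∈ Ico 1 (n / 2) with Odd j, cconv n g (cstar n g) j =
      (∑ p with (p.cast : ZMod 2) = 0, g p) * ∑ q with (q.cast : ZMod 2) = 1, g q := by
  have h2 : 2 ∣ n := dvd_trans (by norm_num) h4
  rw [sum_cast_zero_mul_sum_cast_one h2, sum_cast_eq_one_eq_sum_add_neg h4]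
  refine sum_congr rfl fun j hj => ?_
  rw [cconv_cstar_apply, sum_mul_sub_eq_of_cast_eq_one h2 g
    ((cast_natCast_eq_one_iff_odd h2 j).2 (mem_filter.1 hj).2)]

theorem stmt_5 (n : ℕ) [NeZero n] (hn : 4 ∣ n)
    (a g : ZMod n → ZMod 2) (ha0 : a 0 = 1)
    (hfac : a = cconv n g (cstar n g)) :
    ∑ i ∈ (Finset.Ico 1 (n / 2)).filter (fun i => Odd i), a ((i : ℕ) : ZMod n) = 0 := by
  have hparts :
      ∑ p with (p.cast : ZMod 2) = 0, g p + ∑ q with (q.cast : ZMod 2) = 1, g q = 1 := by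
    rw [ZMod.sum_cast_zero_add_sum_cast_one g, ← ha0, hfac, cconv_cstar_apply]
    simp only [sub_zero, ← sq, ZMod.pow_card]
  rw [hfac, sum_cconv_cstar_odd_eq_mul hn]
  exact (by decide : ∀ u v : ZMod 2, u + v = 1 → u * v = 0) _ _ hparts
end

section
/- Let n = 2^s with s ≥ 2 and h(z) = Σ_{i=0}^{n-1} a_i z^i ∈ F_2[z]/(z^n-1) with a_0 = 1. Then h(z) = g(z)·g*(z) in F_2[z]/(z^n-1) for some g ∈ F_2[z]/(z^n-1) if and only if: h is symmetric (a_i = a_{n-i} for 1 ≤ i ≤ n-1), a_{n/2} = 0, and Σ_{1 ≤ i ≤ n/2-1, i odd} a_i = 0. -/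
open Polynomial Finset

/-!
Work in `R = 𝔽₂[ℤ/n]`, where `g*` is the image of `g` under the reflection `z ↦ z⁻¹`.

Necessity is a coefficient computation: `(g g*)_0 = Σ gᵢ² = Σ gᵢ = 1`, `g g*` is symmetric,
the terms of `(g g*)_{n/2}` cancel in pairs, and the odd coefficients in `[1, n/2)` add up to
`E · O`, the product of the sums of the even- and odd-indexed coefficients of `g`, which
vanishes because `E + O = 1`.

Sufficiency is a counting argument. The conditions leave exactly the coefficients
`a_2, …, a_{n/2-1}` free, so at most `2^(n/2-2)` vectors satisfy them. On the other hand, with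
`u = 1 + z` (nilpotent since `n = 2^s`), the norms `(1 + u^(2κ+1))(1 + u^(2κ+1))*` have the
form `1 + u^(2κ+2) w` with `w` a unit, so the products of these norms over the `2^(n/2-2)`
subsets of `[1, n/2 - 1)` are pairwise distinct: comparing two of them at the smallest index
where the subsets differ gives `u^(2m+2) · unit = 0`, impossible for `2m + 2 < n`. Hence these
products exhaust the vectors satisfying the conditions.
-/

namespace ZMod

variable {n : ℕ}

lemma exists_le_half_eq_or_eq_neg [NeZero n] (x : ZMod n) :
    ∃ i : ℕ, i ≤ n / 2 ∧ (x = i ∨ x = -i) := by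
  refine ⟨x.valMinAbs.natAbs, x.natAbs_valMinAbs_le, ?_⟩
  rcases Int.natAbs_eq x.valMinAbs with h | h
  · left
    conv_lhs => rw [← x.coe_valMinAbs, h]
    simp
  · right
    conv_lhs => rw [← x.coe_valMinAbs, h]
    simp

lemma natCast_injOn_Iio : Set.InjOn (fun i : ℕ => (i : ZMod n)) (Set.Iio n) := by
  intro i hi j hj h
  simpa [val_natCast_of_lt hi, val_natCast_of_lt hj] using congrArg val h

lemma natCast_ne_zero_of_lt {i : ℕ} (h0 : i ≠ 0) (hi : i < n) : (i : ZMod n) ≠ 0 := by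
  simpa [natCast_eq_zero_iff] using fun h => h0 (Nat.eq_zero_of_dvd_of_lt h hi)

/-- The odd residues are the `±i` with `i` odd in `[1, n/2)`, all distinct. -/
lemma sum_odd_eq_sum_Ico [NeZero n] {M : Type*} [AddCommMonoid M] (h2 : 2 ∣ n)
    (hhalf : Even (n / 2)) (f : ZMod n → M) :
    ∑ x ∈ univ.filter (fun x => castHom h2 (ZMod 2) x = 1), f x =
      ∑ i ∈ (Ico 1 (n / 2)).filter Odd, (f i + f (-i)) := by
  set Io := (Ico 1 (n / 2)).filter Odd
  have hIo : ∀ i ∈ Io, 1 ≤ i ∧ i < n / 2 ∧ Odd i := fun i hi => by simp_all [Io]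
  have hinj : Set.InjOn (fun i : ℕ => (i : ZMod n)) Io :=
    natCast_injOn_Iio.mono fun i hi => by have := hIo i hi; simp; omega
  have hinj' : Set.InjOn (fun i : ℕ => -(i : ZMod n)) Io :=
    fun i hi j hj h => hinj hi hj (neg_injective h)
  have hdisj : Disjoint (Io.image fun i : ℕ => (i : ZMod n))
      (Io.image fun i : ℕ => -(i : ZMod n)) := by
    simp only [disjoint_left, mem_image, not_exists, not_and]
    rintro _ ⟨i, hi, rfl⟩ j hj h
    rw [neg_eq_iff_add_eq_zero, ← Nat.cast_add] at h
    have := hIo i hi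
    have := hIo j hj
    exact natCast_ne_zero_of_lt (by omega) (by omega) h
  rw [sum_add_distrib, ← sum_image hinj, ← sum_image hinj', ← sum_union hdisj]
  congr 1
  ext x
  simp only [mem_filter, mem_univ, true_and, mem_union, mem_image]
  constructor
  · intro hx
    obtain ⟨i, hi, hxi⟩ := exists_le_half_eq_or_eq_neg x
    have hodd : Odd i := by
      rw [← natCast_eq_one_iff_odd]
      rcases hxi with rfl | rfl <;> simpa only [map_neg, map_natCast, CharTwo.neg_eq] using hx
    have hi' : i ∈ Io := by
      simp only [Io, mem_filter, mem_Ico]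
      refine ⟨⟨hodd.pos, lt_of_le_of_ne hi ?_⟩, hodd⟩
      rintro rfl
      exact Nat.not_even_iff_odd.mpr hodd hhalf
    rcases hxi with rfl | rfl
    · exact Or.inl ⟨i, hi', rfl⟩
    · exact Or.inr ⟨i, hi', rfl⟩
  · rintro (⟨i, hi, rfl⟩ | ⟨i, hi, rfl⟩) <;>
      simpa only [map_neg, map_natCast, CharTwo.neg_eq, natCast_eq_one_iff_odd] using
        (hIo i hi).2.2

end ZMod

section Convolution

variable {n : ℕ} [NeZero n] {F : Type*} [CommRing F]

lemma cconv_cstar_self_apply (g : ZMod n → F) (k : ZMod n) :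
    cconv n g (cstar n g) k = ∑ j, g j * g (j - k) := by
  simp only [cconv, cstar, neg_sub]

lemma cconv_cstar_self_neg (g : ZMod n → F) (k : ZMod n) :
    cconv n g (cstar n g) (-k) = cconv n g (cstar n g) k := by
  simp only [cconv_cstar_self_apply]
  exact Fintype.sum_equiv (Equiv.addRight k) _ _ fun j => by
    rw [Equiv.coe_addRight, add_sub_cancel_right, sub_neg_eq_add, mul_comm]

/-- The terms `g j g (j - c)` and `g (j + c) g j` are equal and cancel in characteristic `2`. -/
lemma cconv_cstar_self_eq_zero [CharP F 2] (g : ZMod n → F) {c : ZMod n}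
    (hc : c + c = 0) (hc0 : c ≠ 0) : cconv n g (cstar n g) c = 0 := by
  rw [cconv_cstar_self_apply]
  have hneg : -c = c := neg_eq_of_add_eq_zero_left hc
  refine sum_involution (fun j _ => j + c) (fun j _ => ?_) (fun j _ _ h => hc0 (by simpa using h))
    (fun j _ => mem_univ _) (fun j _ => by rw [add_assoc, hc, add_zero])
  rw [add_sub_cancel_right, sub_eq_add_neg j c, hneg, mul_comm (g j), CharTwo.add_self_eq_zero]

/-- For odd `x`, the substitution `j ↦ j - x` turns the odd-`j` terms into even-`j` terms. -/
lemma cconv_cstar_self_of_odd (h2 : 2 ∣ n) (g : ZMod n → F) {x : ZMod n}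
    (hx : ZMod.castHom h2 (ZMod 2) x = 1) :
    cconv n g (cstar n g) x =
      ∑ j ∈ univ.filter (fun j => ZMod.castHom h2 (ZMod 2) j = 0), g j * g (j - x) +
      ∑ j ∈ univ.filter (fun j => ZMod.castHom h2 (ZMod 2) j = 0), g j * g (j + x) := by
  rw [cconv_cstar_self_apply,
    ← sum_filter_add_sum_filter_not _ (fun j => ZMod.castHom h2 (ZMod 2) j = 0)]
  congr 1
  refine sum_equiv (Equiv.subRight x) (fun j => ?_) (fun j _ => by
    rw [Equiv.subRight_apply, sub_add_cancel, mul_comm])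
  simp only [mem_filter, mem_univ, true_and, Equiv.subRight_apply, map_sub, hx]
  generalize ZMod.castHom h2 (ZMod 2) j = b
  revert b
  decide

lemma sum_odd_sum_even_mul (h2 : 2 ∣ n) (g : ZMod n → F) :
    ∑ x ∈ univ.filter (fun x => ZMod.castHom h2 (ZMod 2) x = 1),
      ∑ j ∈ univ.filter (fun j => ZMod.castHom h2 (ZMod 2) j = 0), g j * g (j - x) =
    (∑ j ∈ univ.filter (fun j => ZMod.castHom h2 (ZMod 2) j = 0), g j) *
      ∑ x ∈ univ.filter (fun x => ZMod.castHom h2 (ZMod 2) x = 1), g x := by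
  rw [sum_comm, sum_mul]
  refine sum_congr rfl fun j hj => ?_
  rw [mul_sum]
  refine sum_equiv (Equiv.subLeft j) (fun x => ?_) (fun x _ => rfl)
  simp only [mem_filter, mem_univ, true_and] at hj ⊢
  simp only [Equiv.subLeft_apply, map_sub, hj, zero_sub, CharTwo.neg_eq]

lemma sum_Ico_odd_cconv_cstar_self (h2 : 2 ∣ n) (hhalf : Even (n / 2)) (g : ZMod n → F) :
    ∑ i ∈ (Ico 1 (n / 2)).filter Odd, cconv n g (cstar n g) i =
    (∑ j ∈ univ.filter (fun j => ZMod.castHom h2 (ZMod 2) j = 0), g j) *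
      ∑ x ∈ univ.filter (fun x => ZMod.castHom h2 (ZMod 2) x = 1), g x := by
  rw [← sum_odd_sum_even_mul h2, ZMod.sum_odd_eq_sum_Ico h2 hhalf]
  refine sum_congr rfl fun i hi => ?_
  rw [cconv_cstar_self_of_odd h2 g
    (by simpa [ZMod.natCast_eq_one_iff_odd] using (mem_filter.1 hi).2)]
  simp only [sub_neg_eq_add]

end Convolution

def NormCondition (n : ℕ) (a : ZMod n → ZMod 2) : Prop :=
  a 0 = 1 ∧ (∀ i : ZMod n, a i = a (-i)) ∧ a ((n / 2 : ℕ) : ZMod n) = 0 ∧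
    ∑ i ∈ (Ico 1 (n / 2)).filter Odd, a i = 0

section NormCondition

variable {n : ℕ} [NeZero n]

lemma normCondition_cconv_cstar_self (h4 : 4 ∣ n) (g : ZMod n → ZMod 2)
    (hg : ∑ i, g i = 1) : NormCondition n (cconv n g (cstar n g)) := by
  have h2 : 2 ∣ n := dvd_trans ⟨2, rfl⟩ h4
  have hhalf : Even (n / 2) := by obtain ⟨m, rfl⟩ := h4; exact ⟨m, by omega⟩
  have hn : n ≠ 0 := NeZero.ne n
  refine ⟨?_, fun i => (cconv_cstar_self_neg g i).symm, ?_, ?_⟩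
  · simpa only [cconv_cstar_self_apply, sub_zero, ← sq, ZMod.pow_card] using hg
  · refine cconv_cstar_self_eq_zero g ?_ (ZMod.natCast_ne_zero_of_lt (by omega) (by omega))
    rw [← Nat.cast_add, show n / 2 + n / 2 = n by omega, ZMod.natCast_self]
  · have hEO := sum_filter_add_sum_filter_not univ (fun j => ZMod.castHom h2 (ZMod 2) j = 0) g
    rw [hg, filter_congr (p := fun j => ¬ZMod.castHom h2 (ZMod 2) j = 0)
      (q := fun j => ZMod.castHom h2 (ZMod 2) j = 1) fun j _ => ?_] at hEO
    · rw [sum_Ico_odd_cconv_cstar_self h2 hhalf, eq_sub_of_add_eq' hEO, mul_sub, mul_one, ← sq,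
        ZMod.pow_card, sub_self]
    · generalize ZMod.castHom h2 (ZMod 2) j = b
      revert b
      decide

lemma NormCondition.eq_of_eqOn (hn : 4 ≤ n) {a b : ZMod n → ZMod 2}
    (ha : NormCondition n a) (hb : NormCondition n b)
    (hab : ∀ m ∈ Ico 2 (n / 2), a m = b m) : a = b := by
  obtain ⟨ha0, hasymm, hahalf, hasum⟩ := ha
  obtain ⟨hb0, hbsymm, hbhalf, hbsum⟩ := hb
  have h1 : 1 ∈ (Ico 1 (n / 2)).filter Odd := by
    simp only [mem_filter, mem_Ico]
    exact ⟨⟨le_rfl, by omega⟩, odd_one⟩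
  have hone : a 1 = b 1 := by
    rw [← add_sum_erase _ _ h1] at hasum hbsum
    rw [sum_congr rfl fun i hi => hab i ?_] at hasum
    · simpa using (eq_neg_of_add_eq_zero_left hasum).trans (eq_neg_of_add_eq_zero_left hbsum).symm
    · simp only [mem_erase, mem_filter, mem_Ico] at hi ⊢
      omega
  have hle : ∀ i ≤ n / 2, a i = b i := by
    intro i hi
    rcases (show i = 0 ∨ i = 1 ∨ i = n / 2 ∨ i ∈ Ico 2 (n / 2) by rw [mem_Ico]; omega) with
      rfl | rfl | rfl | hi
    · simpa using ha0.trans hb0.symm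
    · simpa using hone
    · exact hahalf.trans hbhalf.symm
    · exact hab i hi
  funext x
  obtain ⟨i, hi, rfl | rfl⟩ := ZMod.exists_le_half_eq_or_eq_neg x
  · exact hle i hi
  · rw [← hasymm, ← hbsymm]
    exact hle i hi

open Classical in
lemma card_filter_normCondition_le (hn : 4 ≤ n) :
    (univ.filter (NormCondition n)).card ≤ 2 ^ (n / 2 - 2) := by
  calc (univ.filter (NormCondition n)).card
      ≤ (univ : Finset (Ico 2 (n / 2) → ZMod 2)).card :=
        card_le_card_of_injOn (fun b m => b m) (fun _ _ => mem_coe.2 (mem_univ _))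
          fun b hb b' hb' h => NormCondition.eq_of_eqOn hn (mem_filter.1 hb).2 (mem_filter.1 hb').2
            fun m hm => congr_fun h ⟨m, hm⟩
    _ = 2 ^ (n / 2 - 2) := by simp

end NormCondition

open AddMonoidAlgebra

instance AddMonoidAlgebra.charP {F M : Type*} [CommRing F] [AddMonoid M] (p : ℕ) [CharP F p] :
    CharP F[M] p :=
  charP_of_injective_algebraMap' F p

namespace CyclicGroupAlgebra

variable {n : ℕ} {F : Type*} [CommRing F]

noncomputable def reflect : F[ZMod n] ≃+* F[ZMod n] :=
  mapDomainRingEquiv F (AddEquiv.neg (ZMod n))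

lemma coeff_reflect (x : F[ZMod n]) : (reflect x).coeff = cstar n x.coeff := by
  ext i
  simp [reflect, cstar]

lemma reflect_single (i : ZMod n) (c : F) : reflect (single i c) = single (-i) c := by
  simp [reflect]

noncomputable def mulReflect (x : F[ZMod n]) : F[ZMod n] := x * reflect x

lemma mulReflect_prod {ι : Type*} (s : Finset ι) (f : ι → F[ZMod n]) :
    mulReflect (∏ i ∈ s, f i) = ∏ i ∈ s, mulReflect (f i) := by
  simp only [mulReflect, map_prod, prod_mul_distrib]

section Coefficients

variable [NeZero n]

lemma coeff_mul (x y : F[ZMod n]) : (x * y).coeff = cconv n x.coeff y.coeff := by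
  ext k
  rw [coeff_mul_apply_left, Finsupp.sum_fintype _ _ (by simp), cconv]
  simp [sub_eq_neg_add]

lemma coeff_mulReflect (x : F[ZMod n]) :
    (mulReflect x).coeff = cconv n x.coeff (cstar n x.coeff) := by
  rw [mulReflect, coeff_mul, coeff_reflect]

lemma counitAlgHom_eq_sum_coeff (x : F[ZMod n]) :
    Bialgebra.counitAlgHom F F[ZMod n] x = ∑ i, x.coeff i := by
  induction x using AddMonoidAlgebra.induction_linear with
  | zero => simp
  | add x y hx hy => rw [map_add, hx, hy, AddMonoidAlgebra.coeff_add, ← sum_add_distrib]; rfl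
  | single i c => simp

end Coefficients

variable (n) in
noncomputable abbrev augmentation : (ZMod 2)[ZMod n] →ₐ[ZMod 2] ZMod 2 :=
  Bialgebra.counitAlgHom (ZMod 2) _

/-- Both sides are ring homomorphisms in `x` (the left one is Frobenius iterated `s` times), and
they agree on `c zᵃ` because `zⁿ = 1` and `cⁿ = c`. -/
lemma pow_eq_algebraMap_augmentation {s : ℕ} (hn : n = 2 ^ s) (x : (ZMod 2)[ZMod n]) :
    x ^ n = algebraMap (ZMod 2) _ (augmentation n x) := by
  subst hn
  suffices iterateFrobenius (ZMod 2)[ZMod (2 ^ s)] 2 s =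
      (algebraMap (ZMod 2) _).comp (augmentation (2 ^ s)).toRingHom from
    congr($this x)
  refine ringHom_ext (fun r => ?_) (fun m => ?_)
  · simp [iterateFrobenius_def, single_pow, ZMod.pow_card_pow]
  · simp [iterateFrobenius_def, single_pow]

lemma isUnit_of_augmentation_eq_one {s : ℕ} (hn : n = 2 ^ s) {x : (ZMod 2)[ZMod n]}
    (hx : augmentation n x = 1) : IsUnit x := by
  have : IsNilpotent (x - 1) := ⟨n, by rw [pow_eq_algebraMap_augmentation hn, map_sub, hx]; simp⟩
  simpa using this.isUnit_one_add

variable (n) in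
noncomputable def u : (ZMod 2)[ZMod n] := 1 + single 1 1

lemma augmentation_u : augmentation n (u n) = 0 := by
  simp [u]
  decide

lemma augmentation_u_pow {m : ℕ} (hm : m ≠ 0) : augmentation n (u n ^ m) = 0 := by
  rw [map_pow, augmentation_u, zero_pow hm]

/-- The constant coefficient of `(z + 1)ᵐ = Σ C(m, k) zᵏ` is `1`, as `zᵏ ≠ 1` for `0 < k < n`. -/
lemma u_pow_ne_zero {m : ℕ} (hm : m < n) : u n ^ m ≠ 0 := by
  intro h
  have h0 := congr(($h).coeff 0)
  rw [u, add_comm, add_pow, AddMonoidAlgebra.coeff_sum, Finsupp.finsetSum_apply,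
    sum_eq_single 0] at h0
  · simp at h0
  · intro k hk hk0
    rw [single_pow, one_pow, one_pow, mul_one, natCast_def, single_mul_single, coeff_single,
      Finsupp.single_apply, if_neg]
    simp only [nsmul_eq_mul, mul_one, add_zero]
    exact ZMod.natCast_ne_zero_of_lt hk0 (by simp at hk; omega)
  · simp

lemma reflect_u : reflect (u n) = single (-1) 1 * u n := by
  rw [u, map_add, map_one, reflect_single, mul_add, mul_one, single_mul_single, neg_add_cancel,
    mul_one, ← one_def, add_comm]

/-- With `k = 2κ + 1`: `1 + z⁻ᵏ = z⁻ᵏ (1 + z + ⋯ + z^(k-1)) u`, so the witness is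
`w = z⁻ᵏ (1 + z + ⋯ + z^(k-1) + u^(k-1))`, of augmentation `k = 1` in `𝔽₂`. -/
lemma exists_mulReflect_one_add_u_pow {κ : ℕ} (hκ : 1 ≤ κ) :
    ∃ w, augmentation n w = 1 ∧
      mulReflect (1 + u n ^ (2 * κ + 1)) = 1 + u n ^ (2 * κ + 2) * w := by
  obtain ⟨z, z', hz, hz', hzz'⟩ : ∃ z z' : (ZMod 2)[ZMod n],
      z = single 1 1 ∧ z' = single (-1) 1 ∧ (z' * z) ^ (2 * κ + 1) = 1 :=
    ⟨_, _, rfl, rfl, by rw [single_mul_single, neg_add_cancel, mul_one, ← one_def, one_pow]⟩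
  set Q := ∑ i ∈ Finset.range (2 * κ + 1), z ^ i
  have hQ : Q * u n = z ^ (2 * κ + 1) + 1 := by
    rw [show u n = z - 1 by rw [u, hz, CharTwo.sub_eq_add, add_comm], geom_sum_mul,
      CharTwo.sub_eq_add]
  refine ⟨z' ^ (2 * κ + 1) * (Q + u n ^ (2 * κ)), ?_, ?_⟩
  · rw [map_mul, map_add, augmentation_u_pow (by omega), add_zero]
    simp [Q, hz, hz', CharTwo.two_eq_zero]
  · rw [mulReflect, map_add, map_one, map_pow, reflect_u, ← hz']
    linear_combination (-(u n ^ (2 * κ + 1)) * z' ^ (2 * κ + 1)) * hQ + (-(u n ^ (2 * κ + 1))) * hzz'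

lemma exists_prod_mulReflect_eq {m : ℕ} (S : Finset ℕ) (hS : ∀ κ ∈ S, 1 ≤ κ ∧ m ≤ κ) :
    ∃ w, ∏ κ ∈ S, mulReflect (1 + u n ^ (2 * κ + 1)) = 1 + u n ^ (2 * m + 2) * w ∧
      augmentation n w = if m ∈ S then 1 else 0 := by
  classical
  induction S using Finset.induction_on with
  | empty => exact ⟨0, by simp, by simp⟩
  | insert κ S hκS ih =>
    obtain ⟨w, hprod, hw⟩ := ih fun j hj => hS j (mem_insert_of_mem hj)
    obtain ⟨hκ1, hmκ⟩ := hS κ (mem_insert_self κ S)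
    obtain ⟨v, hv, hnorm⟩ := exists_mulReflect_one_add_u_pow (n := n) hκ1
    obtain ⟨d, rfl⟩ := Nat.exists_eq_add_of_le hmκ
    refine ⟨u n ^ (2 * d) * v + w + u n ^ (2 * (m + d) + 2) * v * w, ?_, ?_⟩
    · rw [prod_insert hκS, hnorm, hprod]; ring
    · rw [map_add, map_add, map_mul, map_mul, map_mul, hv, hw,
        augmentation_u_pow (m := 2 * (m + d) + 2) (by omega), zero_mul, zero_mul, add_zero, mul_one]
      rcases Nat.eq_zero_or_pos d with rfl | hd
      · simp_all
      · rw [augmentation_u_pow (by omega), zero_add]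
        simp only [mem_insert, show m ≠ m + d by omega, false_or]

lemma prod_mulReflect_ne {s m : ℕ} (hn : n = 2 ^ s) (hm : 2 * m + 2 < n) {A B : Finset ℕ}
    (hA : ∀ κ ∈ A, 1 ≤ κ ∧ m ≤ κ) (hB : ∀ κ ∈ B, 1 ≤ κ ∧ m ≤ κ) (hmA : m ∈ A) (hmB : m ∉ B) :
    ∏ κ ∈ A, mulReflect (1 + u n ^ (2 * κ + 1)) ≠ ∏ κ ∈ B, mulReflect (1 + u n ^ (2 * κ + 1)) := by
  obtain ⟨w, hAw, hw⟩ := exists_prod_mulReflect_eq (n := n) A hA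
  obtain ⟨w', hBw, hw'⟩ := exists_prod_mulReflect_eq (n := n) B hB
  rw [if_pos hmA] at hw
  rw [if_neg hmB] at hw'
  rw [hAw, hBw]
  intro h
  have hunit : IsUnit (w - w') := isUnit_of_augmentation_eq_one hn (by rw [map_sub, hw, hw', sub_zero])
  exact u_pow_ne_zero hm (hunit.mul_left_eq_zero.1 (by linear_combination h))

lemma isUnit_prod_mulReflect {s : ℕ} (hn : n = 2 ^ s) (S : Finset ℕ) (hS : ∀ κ ∈ S, 1 ≤ κ) :
    IsUnit (∏ κ ∈ S, mulReflect (1 + u n ^ (2 * κ + 1))) := by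
  refine isUnit_of_augmentation_eq_one hn ?_
  rw [map_prod]
  refine prod_eq_one fun κ hκ => ?_
  obtain ⟨w, -, hw⟩ := exists_mulReflect_one_add_u_pow (n := n) (hS κ hκ)
  rw [hw, map_add, map_one, map_mul, augmentation_u_pow (by omega), zero_mul, add_zero]

lemma prod_mulReflect_injOn {s : ℕ} (hn : n = 2 ^ s) :
    Set.InjOn (fun S : Finset ℕ => ∏ κ ∈ S, mulReflect (1 + u n ^ (2 * κ + 1)))
      {S | ∀ κ ∈ S, 1 ≤ κ ∧ 2 * κ + 2 < n} := by
  classical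
  intro S hS T hT hST
  by_contra hne
  have hunit := isUnit_prod_mulReflect (n := n) hn (S ∩ T) fun κ hκ => (hS κ (mem_inter.1 hκ).1).1
  have hcancel : ∏ κ ∈ S \ T, mulReflect (1 + u n ^ (2 * κ + 1)) =
      ∏ κ ∈ T \ S, mulReflect (1 + u n ^ (2 * κ + 1)) := by
    refine hunit.mul_left_cancel ?_
    rw [prod_inter_mul_prod_sdiff, inter_comm, prod_inter_mul_prod_sdiff]
    exact hST
  have hD : (S \ T ∪ T \ S).Nonempty := by
    rw [nonempty_iff_ne_empty, Ne, union_eq_empty, sdiff_eq_empty_iff_subset,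
      sdiff_eq_empty_iff_subset]
    exact fun h => hne (Subset.antisymm h.1 h.2)
  set m := (S \ T ∪ T \ S).min' hD
  have hbound : ∀ κ ∈ S \ T ∪ T \ S, 1 ≤ κ ∧ m ≤ κ ∧ 2 * κ + 2 < n := by
    intro κ hκ
    have : 1 ≤ κ ∧ 2 * κ + 2 < n := by
      rcases mem_union.1 hκ with h | h
      exacts [hS κ (mem_sdiff.1 h).1, hT κ (mem_sdiff.1 h).1]
    exact ⟨this.1, min'_le _ _ hκ, this.2⟩
  have hm := hbound m (min'_mem _ hD)
  have hA := fun κ hκ => (hbound κ (mem_union_left (T \ S) hκ)).imp_right And.left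
  have hB := fun κ hκ => (hbound κ (mem_union_right (S \ T) hκ)).imp_right And.left
  rcases mem_union.1 (min'_mem _ hD) with hmS | hmT
  · exact prod_mulReflect_ne hn hm.2.2 hA hB hmS
      (fun h => (mem_sdiff.1 h).2 (mem_sdiff.1 hmS).1) hcancel
  · exact prod_mulReflect_ne hn hm.2.2 hB hA hmT
      (fun h => (mem_sdiff.1 h).2 (mem_sdiff.1 hmT).1) hcancel.symm

lemma normCondition_coeff_mulReflect [NeZero n] (h4 : 4 ∣ n) {x : (ZMod 2)[ZMod n]}
    (hx : augmentation n x = 1) : NormCondition n (mulReflect x).coeff := by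
  rw [coeff_mulReflect]
  exact normCondition_cconv_cstar_self h4 _ (by rwa [← counitAlgHom_eq_sum_coeff])

lemma exists_eq_coeff_mulReflect [NeZero n] {s : ℕ} (hn : n = 2 ^ s) (hs : 2 ≤ s)
    {a : ZMod n → ZMod 2} (ha : NormCondition n a) :
    ∃ x : (ZMod 2)[ZMod n], a = (mulReflect x).coeff := by
  classical
  have h4 : 4 ∣ n := hn ▸ (pow_dvd_pow 2 hs : 2 ^ 2 ∣ 2 ^ s)
  have hn4 : 4 ≤ n := Nat.le_of_dvd (Nat.pos_of_ne_zero (NeZero.ne n)) h4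
  obtain ⟨Φ, hΦ⟩ : ∃ Φ : Finset ℕ → ZMod n → ZMod 2,
      ∀ S, Φ S = (mulReflect (∏ κ ∈ S, (1 + u n ^ (2 * κ + 1)))).coeff := ⟨_, fun _ => rfl⟩
  have hK : ∀ S ∈ (Ico 1 (n / 2 - 1)).powerset, ∀ κ ∈ S, 1 ≤ κ ∧ 2 * κ + 2 < n :=
    fun S hS κ hκ => by have := mem_Ico.1 (mem_powerset.1 hS hκ); omega
  have hΦC : (Ico 1 (n / 2 - 1)).powerset.image Φ ⊆ univ.filter (NormCondition n) := by
    intro b hb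
    obtain ⟨S, hS, rfl⟩ := mem_image.1 hb
    refine mem_filter.2 ⟨mem_univ _, hΦ S ▸ normCondition_coeff_mulReflect h4 ?_⟩
    rw [map_prod]
    refine prod_eq_one fun κ hκ => ?_
    rw [map_add, map_one, augmentation_u_pow (by have := hK S hS κ hκ; omega), add_zero]
  have hΦinj : Set.InjOn Φ (Ico 1 (n / 2 - 1)).powerset := by
    intro S hS T hT hST
    refine prod_mulReflect_injOn hn (hK S hS) (hK T hT) ?_
    rw [hΦ, hΦ] at hST
    simpa only [mulReflect_prod] using coeff_injective (DFunLike.coe_injective hST)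
  have hCeq := eq_of_subset_of_card_le hΦC <| (card_filter_normCondition_le hn4).trans <| by
    rw [card_image_of_injOn hΦinj, card_powerset, Nat.card_Ico, Nat.sub_sub]
  obtain ⟨S, -, hS⟩ := mem_image.1 (hCeq ▸ mem_filter.2 ⟨mem_univ a, ha⟩)
  exact ⟨_, hS.symm.trans (hΦ S)⟩

end CyclicGroupAlgebra

theorem stmt_6 (n s : ℕ) [NeZero n] (hs : 2 ≤ s) (hn : n = 2 ^ s)
    (a : ZMod n → ZMod 2) (ha0 : a 0 = 1) :
    (∃ g : ZMod n → ZMod 2, a = cconv n g (cstar n g)) ↔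
      ((∀ i : ZMod n, a i = a (-i)) ∧ a ((n / 2 : ℕ) : ZMod n) = 0 ∧
        ∑ i ∈ (Finset.Ico 1 (n / 2)).filter (fun i => Odd i), a ((i : ℕ) : ZMod n) = 0) := by
  constructor
  · rintro ⟨g, rfl⟩
    have hg : ∑ i, g i = 1 := by
      simpa only [cconv_cstar_self_apply, sub_zero, ← sq, ZMod.pow_card] using ha0
    exact (normCondition_cconv_cstar_self (hn ▸ pow_dvd_pow 2 hs) g hg).2
  · rintro ⟨hsymm, hhalf, hsum⟩
    obtain ⟨x, rfl⟩ := CyclicGroupAlgebra.exists_eq_coeff_mulReflect hn hs ⟨ha0, hsymm, hhalf, hsum⟩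
    exact ⟨x.coeff, CyclicGroupAlgebra.coeff_mulReflect x⟩
end

section
/- Let n = 2^s, s ≥ 2. Define G as the set of g(z) = Σ_{i=0}^{n-1} b_i z^i ∈ F_2[z]/(z^n-1) with b_0 = 1, b_{n-1} = 0, b_2 = b_{n-3} = 0, and b_i = b_{n-1-i} for all i ∈ {1, 3, 4, ..., n/2 - 1}; and H as the set of h(z) = Σ a_i z^i with a_0 = 1, a_{n/2} = 0, a_i = a_{n-i} for 1 ≤ i ≤ n/2-1, and Σ_{1≤i≤n/2-1, i odd} a_i = 0. Then the map g ↦ g·g* is a bijection from G to H; in particular every h ∈ H has a unique factorization h = g·g* with g ∈ G. -/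
open Polynomial Finset

/-!
For `g ∈ G` the coefficient conditions say exactly that `g* = z g + 1 + z`, so
`g g* = z g² + (1 + z) g`, which is additive in `g` over `𝔽₂`. An element `d` of its kernel
satisfies `Σ_{2i = k} d_i = d_k + d_{k+1}`; iterating this `s - 1` times shows that every window
of `n/2` consecutive coefficients of `d` sums to zero except those starting at `0` and `n/2`,
hence `d_{k + n/2} = d_k` away from the ends. Fed back into the recursion, this makes `d`
constant on `1, …, n - 2` with `d_{n-1} = d_0`, so `d_0 = d_2 = 0` forces `d = 0`. The image lies
in `H` by a direct computation, and an explicit injection `H → G` gives `|H| ≤ |G|`, so the map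
is onto.
-/

lemma Set.bijOn_of_injOn_of_injOn_back {α β : Type*} {s : Set α} {t : Set β} {f : α → β}
    {g : β → α} (hs : s.Finite) (ht : t.Finite) (hf : Set.MapsTo f s t) (hf_inj : Set.InjOn f s)
    (hg : Set.MapsTo g t s) (hg_inj : Set.InjOn g t) : Set.BijOn f s t := by
  refine ⟨hf, hf_inj, ?_⟩
  have h_le : t.ncard ≤ (f '' s).ncard := by
    rw [hf_inj.ncard_image]
    exact Set.ncard_le_ncard_of_injOn g hg hg_inj hs
  exact (Set.eq_of_subset_of_ncard_le hf.image_subset h_le ht).symm.subset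

lemma sum_range_two_mul {M : Type*} [AddCommMonoid M] (f : ℕ → M) (N : ℕ) :
    ∑ i ∈ range (2 * N), f i = ∑ j ∈ range N, (f (2 * j) + f (2 * j + 1)) := by
  induction N with
  | zero => simp
  | succ N ih => rw [Nat.mul_succ, sum_range_succ, sum_range_succ, sum_range_succ, ih, add_assoc]

section FiniteRing

variable {A : Type*} [CommRing A] [Fintype A] [DecidableEq A]

-- The coefficients of `f²` over `𝔽₂`: the terms `i` and `c - i` cancel unless `2 * i = c`.
lemma sum_mul_apply_sub_eq_sum_filter (f : A → ZMod 2) (c : A) :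
    ∑ i, f i * f (c - i) = ∑ i ∈ univ.filter (fun i => 2 * i = c), f i := by
  rw [← sum_filter_add_sum_filter_not univ (fun i => 2 * i = c)]
  have h_fixed : ∀ i ∈ univ.filter (fun i => 2 * i = c), f i * f (c - i) = f i := by
    intro i hi
    rw [(mem_filter.1 hi).2.symm, two_mul, add_sub_cancel_right, ← sq, ZMod.pow_card]
  have h_paired : ∑ i ∈ univ.filter (fun i => ¬ 2 * i = c), f i * f (c - i) = 0 := by
    refine sum_involution (fun i _ => c - i) (fun i _ => ?_) (fun i hi _ h => ?_)
      (fun i hi => ?_) (fun i _ => sub_sub_cancel c i)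
    · rw [sub_sub_cancel, mul_comm, CharTwo.add_self_eq_zero]
    · simp only [mem_filter, mem_univ, true_and] at hi
      exact hi (by linear_combination -h)
    · simp only [mem_filter, mem_univ, true_and] at hi ⊢
      exact fun h => hi (by linear_combination -h)
  rw [sum_congr rfl h_fixed, h_paired, add_zero]

lemma sum_filter_two_pow_mul {M : Type*} [AddCommMonoid M] (d : A → M)
    (hd : ∀ k, ∑ i ∈ univ.filter (fun i => 2 * i = k), d i = d k + d (k + 1)) (t : ℕ) (k : A) :
    ∑ i ∈ univ.filter (fun i => 2 ^ t * i = k), d i = ∑ i ∈ range (2 ^ t), d (k + i) := by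
  induction t generalizing k with
  | zero => simp [sum_filter]
  | succ t ih =>
    have h_fibers : ∑ i ∈ univ.filter (fun i => 2 ^ (t + 1) * i = k), d i =
        ∑ j ∈ univ.filter (fun j => 2 ^ t * j = k),
          ∑ i ∈ univ.filter (fun i => 2 * i = j), d i := by
      rw [← sum_fiberwise_of_maps_to (g := fun i => 2 * i)
        (t := univ.filter (fun j => 2 ^ t * j = k))]
      · refine sum_congr rfl fun j hj => ?_
        rw [filter_filter]
        congr 1
        ext i
        simp only [mem_filter, mem_univ, true_and] at hj ⊢
        exact ⟨And.right, fun h => ⟨by rw [← hj, ← h]; ring, h⟩⟩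
      · intro i hi
        simp only [mem_filter, mem_univ, true_and] at hi ⊢
        rw [← hi]; ring
    have h_shift : ∑ j ∈ univ.filter (fun j => 2 ^ t * j = k), d (j + 1) =
        ∑ j ∈ univ.filter (fun j => 2 ^ t * j = k + 2 ^ t), d j := by
      refine sum_nbij' (· + 1) (· - 1) ?_ ?_ (fun j _ => add_sub_cancel_right j 1)
        (fun j _ => sub_add_cancel j 1) (fun j _ => rfl)
      · intro j hj
        simp only [mem_filter, mem_univ, true_and] at hj ⊢
        rw [mul_add, hj, mul_one]
      · intro j hj
        simp only [mem_filter, mem_univ, true_and] at hj ⊢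
        rw [mul_sub, hj, mul_one, add_sub_cancel_right]
    rw [h_fibers, sum_congr rfl fun j _ => hd j, sum_add_distrib, h_shift, ih, ih, pow_succ,
      mul_two, sum_range_add]
    congr 1
    refine sum_congr rfl fun i _ => ?_
    push_cast
    ring_nf

end FiniteRing

lemma ZMod.natCast_ne_natCast {n a b : ℕ} (ha : a < n) (hb : b < n) (h : a ≠ b) :
    (a : ZMod n) ≠ b := by
  rwa [Ne, ZMod.natCast_eq_natCast_iff', Nat.mod_eq_of_lt ha, Nat.mod_eq_of_lt hb]

lemma ZMod.natCast_sub_of_le {n v : ℕ} (hv : v ≤ n) : ((n - v : ℕ) : ZMod n) = -v := by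
  rw [Nat.cast_sub hv, ZMod.natCast_self, zero_sub]

lemma ZMod.natCast_sub_one_sub {n v : ℕ} (hv : v < n) :
    ((n - 1 - v : ℕ) : ZMod n) = -1 - v := by
  rw [Nat.sub_sub, ZMod.natCast_sub_of_le (by omega), Nat.cast_add, Nat.cast_one, neg_add']

section EvenModulus

variable {n : ℕ} [NeZero n]

lemma ZMod.neg_one_eq_natCast_sub_one : (-1 : ZMod n) = ((n - 1 : ℕ) : ZMod n) := by
  rw [ZMod.natCast_sub_of_le (Nat.one_le_of_lt (Nat.pos_of_neZero n)), Nat.cast_one]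

lemma ZMod.two_mul_eq_zero_iff (hn : 2 ∣ n) {x : ZMod n} :
    2 * x = 0 ↔ x = 0 ∨ x = ((n / 2 : ℕ) : ZMod n) := by
  constructor
  · intro h
    rw [← ZMod.natCast_zmod_val x] at h ⊢
    rw [← Nat.cast_ofNat, ← Nat.cast_mul, ZMod.natCast_eq_zero_iff] at h
    obtain ⟨c, hc⟩ := h
    have hlt := ZMod.val_lt x
    have hc2 : c < 2 := by nlinarith
    interval_cases c
    · left; rw [show x.val = 0 by omega, Nat.cast_zero]
    · right; rw [show x.val = n / 2 by omega]
  · rintro (rfl | rfl)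
    · rw [mul_zero]
    · rw [← Nat.cast_ofNat, ← Nat.cast_mul, Nat.mul_div_cancel' hn, ZMod.natCast_self]

lemma sum_filter_two_mul_eq_two_mul {M : Type*} [AddCommMonoid M] (hn : 2 ∣ n)
    (f : ZMod n → M) (j : ZMod n) :
    ∑ i ∈ univ.filter (fun i => 2 * i = 2 * j), f i = f j + f (j + ((n / 2 : ℕ) : ZMod n)) := by
  have h_half : ((n / 2 : ℕ) : ZMod n) ≠ 0 := by
    rw [Ne, ZMod.natCast_eq_zero_iff]
    intro h
    have := Nat.eq_zero_of_dvd_of_lt h (Nat.div_lt_self (Nat.pos_of_neZero n) one_lt_two)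
    have := NeZero.ne n
    omega
  have h_fiber : univ.filter (fun i => 2 * i = 2 * j) = {j, j + ((n / 2 : ℕ) : ZMod n)} := by
    ext i
    rw [mem_filter, mem_insert, mem_singleton, ← sub_eq_zero, ← mul_sub,
      ZMod.two_mul_eq_zero_iff hn, sub_eq_zero, sub_eq_iff_eq_add']
    simp
  rw [h_fiber, sum_pair (by simpa using h_half)]

lemma sum_filter_two_mul_eq_odd {M : Type*} [AddCommMonoid M] (hn : 2 ∣ n) (f : ZMod n → M)
    {w : ℕ} (hw : Odd w) : ∑ i ∈ univ.filter (fun i => 2 * i = (w : ZMod n)), f i = 0 := by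
  refine sum_eq_zero fun i hi => absurd (mem_filter.1 hi).2 fun h => ?_
  have h2 := congrArg (ZMod.castHom hn (ZMod 2)) h
  rw [map_mul, map_ofNat, map_natCast, hw.natCast_zmod_two,
    show (2 : ZMod 2) = 0 from rfl, zero_mul] at h2
  exact zero_ne_one h2

lemma cconv_cstar_neg {F : Type*} [CommRing F] (g : ZMod n → F) (k : ZMod n) :
    cconv n g (cstar n g) (-k) = cconv n g (cstar n g) k := by
  refine Fintype.sum_equiv (Equiv.addRight k) _ _ fun i => ?_
  simp only [cstar, Equiv.coe_addRight, neg_sub, sub_neg_eq_add, sub_add_cancel_right, neg_neg]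
  rw [mul_comm, add_comm]

end EvenModulus

/-- Coefficients of `z g² + (1 + z) g`, which is `g g*` for `g ∈ G` (there `g* = z g + 1 + z`). -/
def quadMap (n : ℕ) [NeZero n] (b : ZMod n → ZMod 2) (k : ZMod n) : ZMod 2 :=
  (∑ i ∈ univ.filter (fun i => 2 * i = k - 1), b i) + b k + b (k - 1)

section Kernel

variable {n s : ℕ} [NeZero n] {d : ZMod n → ZMod 2}

lemma quadMap_add (b c : ZMod n → ZMod 2) :
    quadMap n (b + c) = quadMap n b + quadMap n c := by
  funext k
  simp only [quadMap, Pi.add_apply, sum_add_distrib]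
  ring

lemma sum_filter_two_mul_of_quadMap_eq_zero (hd : quadMap n d = 0) (k : ZMod n) :
    ∑ i ∈ univ.filter (fun i => 2 * i = k), d i = d k + d (k + 1) := by
  have h := congrFun hd (k + 1)
  simp only [quadMap, add_sub_cancel_right, Pi.zero_apply] at h
  rw [CharTwo.add_eq_zero, CharTwo.add_eq_iff_eq_add] at h
  rw [h, add_comm]

lemma sum_range_half_eq_zero_of_quadMap_eq_zero (hs : 1 ≤ s) (hn : n = 2 ^ s)
    (hd : quadMap n d = 0) {x : ZMod n} (hx₀ : x ≠ 0) (hx : x ≠ ((n / 2 : ℕ) : ZMod n)) :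
    ∑ i ∈ range (n / 2), d (x + i) = 0 := by
  have h_half : n / 2 = 2 ^ (s - 1) := by
    rw [hn, ← Nat.pow_div hs two_pos, pow_one]
  rw [h_half, ← sum_filter_two_pow_mul d (sum_filter_two_mul_of_quadMap_eq_zero hd)]
  refine sum_eq_zero fun i hi => absurd (mem_filter.1 hi).2 fun h => ?_
  have h_two : 2 * ((2 : ZMod n) ^ (s - 1) * i) = 0 := by
    rw [← mul_assoc, ← pow_succ', Nat.sub_add_cancel hs, ← Nat.cast_ofNat, ← Nat.cast_pow, ← hn,
      ZMod.natCast_self, zero_mul]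
  rw [h, ZMod.two_mul_eq_zero_iff ⟨2 ^ (s - 1), by rw [hn, ← pow_succ', Nat.sub_add_cancel hs]⟩]
    at h_two
  exact h_two.elim hx₀ hx

/-- The windows of length `n/2` starting at `j` and `j + 1` both sum to zero, and they differ by
`d j + d (j + n/2)`. -/
lemma apply_add_half_of_quadMap_eq_zero (hs : 1 ≤ s) (hn : n = 2 ^ s) (hd : quadMap n d = 0)
    {j : ℕ} (hj₁ : 1 ≤ j) (hj₂ : j + 2 ≤ n / 2) :
    d (j + ((n / 2 : ℕ) : ZMod n)) = d j := by
  have h_window : ∀ x : ℕ, 1 ≤ x → x + 1 ≤ n / 2 → ∑ i ∈ range (n / 2), d (x + i) = 0 := by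
    intro x hx₁ hx₂
    have : n / 2 < n := Nat.div_lt_self (Nat.pos_of_neZero n) one_lt_two
    refine sum_range_half_eq_zero_of_quadMap_eq_zero hs hn hd ?_ ?_
    · exact_mod_cast ZMod.natCast_ne_natCast (n := n) (by omega) (by omega) (by omega : x ≠ 0)
    · exact ZMod.natCast_ne_natCast (by omega) (by omega) (by omega)
  have h_tel := sum_range_sub (fun i => d (j + i)) (n / 2)
  have h_next : ∑ i ∈ range (n / 2), d (j + ((i + 1 : ℕ) : ZMod n)) = 0 := by
    rw [← h_window (j + 1) (by omega) (by omega)]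
    refine sum_congr rfl fun i _ => ?_
    push_cast
    ring_nf
  rw [sum_sub_distrib, h_window j hj₁ (by omega), h_next, sub_zero, Nat.cast_zero, add_zero,
    eq_comm, sub_eq_zero] at h_tel
  exact h_tel

theorem eq_zero_of_quadMap_eq_zero (hs : 2 ≤ s) (hn : n = 2 ^ s) (hd : quadMap n d = 0)
    (h₀ : d 0 = 0) (h₂ : d 2 = 0) : d = 0 := by
  have hrec := sum_filter_two_mul_of_quadMap_eq_zero hd
  have h_four : 4 ∣ n := hn ▸ pow_dvd_pow 2 hs
  have h_two : 2 ∣ n := dvd_trans (by norm_num) h_four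
  have h_odd : ∀ w : ℕ, Odd w → d (w + 1) = d w := by
    intro w hw
    have h := hrec w
    rw [sum_filter_two_mul_eq_odd h_two d hw, eq_comm, CharTwo.add_eq_zero] at h
    exact h.symm
  have h_even : ∀ j : ℕ, 1 ≤ j → j + 2 ≤ n / 2 → d (2 * j + 1) = d (2 * j) := by
    intro j hj₁ hj₂
    have h := hrec (2 * j)
    rw [sum_filter_two_mul_eq_two_mul h_two,
      apply_add_half_of_quadMap_eq_zero (by omega) hn hd hj₁ hj₂,
      CharTwo.add_self_eq_zero, eq_comm, CharTwo.add_eq_zero] at h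
    exact h.symm
  have h_mid : ∀ v : ℕ, 1 ≤ v → v + 2 ≤ n → d v = 0 := by
    intro v hv₁ hv₂
    induction v, hv₁ using Nat.le_induction with
    | base => simpa [← h₂, one_add_one_eq_two] using (h_odd 1 odd_one).symm
    | succ v hv ih =>
      rw [Nat.cast_succ, ← ih (by omega)]
      obtain ⟨j, rfl | rfl⟩ := Nat.even_or_odd' v
      · exact_mod_cast h_even j (by omega) (by omega)
      · exact h_odd _ (odd_two_mul_add_one j)
  funext k
  rw [Pi.zero_apply, ← ZMod.natCast_zmod_val k]
  have hk := ZMod.val_lt k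
  obtain hk₀ | hk₁ | hk' : k.val = 0 ∨ k.val = n - 1 ∨ (1 ≤ k.val ∧ k.val + 2 ≤ n) := by omega
  · rw [hk₀, Nat.cast_zero, h₀]
  · have h := h_odd (n - 1) (by obtain ⟨m, hm⟩ := h_four; exact ⟨2 * m - 1, by omega⟩)
    rw [← Nat.cast_add_one, Nat.sub_add_cancel (Nat.pos_of_neZero n), ZMod.natCast_self, h₀]
      at h
    rw [hk₁, ← h]
  · exact h_mid _ hk'.1 hk'.2

end Kernel

def setG (n : ℕ) [NeZero n] : Set (ZMod n → ZMod 2) :=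
  {b : ZMod n → ZMod 2 | b 0 = 1 ∧ b (((n - 1 : ℕ) : ZMod n)) = 0 ∧
    b ((2 : ℕ) : ZMod n) = 0 ∧ b (((n - 3 : ℕ) : ZMod n)) = 0 ∧
    ∀ i : ℕ, (i = 1 ∨ (3 ≤ i ∧ i ≤ n / 2 - 1)) →
      b ((i : ℕ) : ZMod n) = b (((n - 1 - i : ℕ) : ZMod n))}

def setH (n : ℕ) [NeZero n] : Set (ZMod n → ZMod 2) :=
  {a : ZMod n → ZMod 2 | a 0 = 1 ∧ a ((n / 2 : ℕ) : ZMod n) = 0 ∧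
    (∀ i : ℕ, 1 ≤ i → i ≤ n / 2 - 1 → a ((i : ℕ) : ZMod n) = a (((n - i : ℕ) : ZMod n))) ∧
    ∑ i ∈ (Finset.Ico 1 (n / 2)).filter (fun i => Odd i), a ((i : ℕ) : ZMod n) = 0}

section SquareMap

variable {n s : ℕ} [NeZero n]

lemma apply_neg_one_sub_of_mem_setG (h2 : 2 ∣ n) {b : ZMod n → ZMod 2}
    (hb : b ∈ setG n) {x : ZMod n} (hx₀ : x ≠ 0) (hx₁ : x ≠ -1) : b (-1 - x) = b x := by
  obtain ⟨-, -, hb₂, hb₃, hb_symm⟩ := hb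
  have h_low : ∀ v : ℕ, 1 ≤ v → v ≤ n / 2 - 1 → b (-1 - v) = b v := by
    intro v hv₁ hv₂
    rw [← ZMod.natCast_sub_one_sub (by omega)]
    obtain rfl | rfl | hv₃ : v = 1 ∨ v = 2 ∨ 3 ≤ v := by omega
    · exact (hb_symm 1 (Or.inl rfl)).symm
    · rw [show n - 1 - 2 = n - 3 by omega, hb₃, hb₂]
    · exact (hb_symm v (Or.inr ⟨hv₃, hv₂⟩)).symm
  rw [← ZMod.natCast_zmod_val x] at hx₀ hx₁ ⊢
  have hv := ZMod.val_lt x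
  have hv₀ : x.val ≠ 0 := fun h => hx₀ (by rw [h, Nat.cast_zero])
  have hv₁ : x.val ≠ n - 1 := fun h => hx₁ (by rw [h, ZMod.neg_one_eq_natCast_sub_one])
  obtain h | h : x.val ≤ n / 2 - 1 ∨ n / 2 ≤ x.val := by omega
  · exact h_low _ (by omega) h
  · have h' := h_low (n - 1 - x.val) (by omega) (by omega)
    rwa [ZMod.natCast_sub_one_sub hv, sub_sub_cancel, eq_comm] at h'

/-- The coefficient form of `g* = z g + 1 + z`. -/
lemma cstar_apply_of_mem_setG (h2 : 2 ∣ n) {b : ZMod n → ZMod 2} (hb : b ∈ setG n) (i : ZMod n) :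
    cstar n b i = b (i - 1) + (if i = 0 then 1 else 0) + (if i = 1 then 1 else 0) := by
  have h₁ : b (-1) = 0 := by rw [ZMod.neg_one_eq_natCast_sub_one]; exact hb.2.1
  have hn : 2 ≤ n := Nat.le_of_dvd (Nat.pos_of_neZero n) h2
  have h01 : (0 : ZMod n) ≠ 1 := by
    exact_mod_cast ZMod.natCast_ne_natCast (n := n) (by omega) (by omega) zero_ne_one
  unfold cstar
  by_cases hi₀ : i = 0
  · rw [hi₀, if_pos rfl, if_neg h01, neg_zero, zero_sub, hb.1, h₁]; rfl
  by_cases hi₁ : i = 1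
  · rw [hi₁, if_neg h01.symm, if_pos rfl, sub_self, hb.1, h₁]; rfl
  rw [if_neg hi₀, if_neg hi₁, add_zero, add_zero, ← apply_neg_one_sub_of_mem_setG h2 hb
    (sub_ne_zero.2 hi₁) (by rwa [Ne, sub_eq_neg_self])]
  congr 1
  ring

lemma cconv_cstar_eq_quadMap {b : ZMod n → ZMod 2} (hstar : ∀ i, cstar n b i =
    b (i - 1) + (if i = 0 then 1 else 0) + (if i = 1 then 1 else 0)) :
    cconv n b (cstar n b) = quadMap n b := by
  funext k
  have h_one : ∀ i : ZMod n, k - i = 1 ↔ k - 1 = i := fun i => by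
    rw [sub_eq_iff_eq_add, sub_eq_iff_eq_add']
  simp only [cconv, hstar, mul_add, sum_add_distrib, mul_ite, mul_one, mul_zero, sub_eq_zero,
    h_one, sum_ite_eq, mem_univ, if_true, sub_right_comm k _ 1, quadMap,
    sum_mul_apply_sub_eq_sum_filter]

lemma sum_filter_odd_quadMap_eq_zero (h4 : 4 ∣ n) {b : ZMod n → ZMod 2} (hb : b ∈ setG n) :
    ∑ i ∈ (Ico 1 (n / 2)).filter (fun i => Odd i), quadMap n b i = 0 := by
  have hn : 4 ≤ n := Nat.le_of_dvd (Nat.pos_of_neZero n) h4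
  have h2 : 2 ∣ n := dvd_trans (by norm_num) h4
  have h_odd : (Ico 1 (n / 2)).filter (fun i => Odd i) = (range (n / 4)).image (2 * · + 1) := by
    ext i
    simp only [mem_filter, mem_Ico, mem_image, mem_range]
    constructor
    · rintro ⟨⟨-, hi⟩, j, rfl⟩
      exact ⟨j, by omega, rfl⟩
    · rintro ⟨j, hj, rfl⟩
      exact ⟨⟨by omega, by omega⟩, odd_two_mul_add_one j⟩
  have h_term : ∀ j ∈ range (n / 4), quadMap n b ((2 * j + 1 : ℕ) : ZMod n) =
      (b j + b ((n / 2 - 1 - j : ℕ) : ZMod n)) + (b ((2 * j : ℕ) : ZMod n) +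
        b ((2 * j + 1 : ℕ) : ZMod n)) := by
    intro j hj
    rw [mem_range] at hj
    have h_far : b ((n / 2 - 1 - j : ℕ) : ZMod n) = b (j + ((n / 2 : ℕ) : ZMod n)) := by
      rw [show n / 2 - 1 - j = n - 1 - (j + n / 2) by omega,
        ZMod.natCast_sub_one_sub (by omega), ← Nat.cast_add]
      refine apply_neg_one_sub_of_mem_setG h2 hb ?_ ?_
      · exact_mod_cast ZMod.natCast_ne_natCast (n := n) (by omega) (by omega)
          (by omega : j + n / 2 ≠ 0)
      · rw [ZMod.neg_one_eq_natCast_sub_one]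
        exact ZMod.natCast_ne_natCast (by omega) (by omega) (by omega)
    rw [quadMap, h_far, Nat.cast_add_one, add_sub_cancel_right, Nat.cast_mul, Nat.cast_ofNat,
      sum_filter_two_mul_eq_two_mul h2]
    ring
  have h_first : ∑ j ∈ range (n / 4), (b j + b ((n / 2 - 1 - j : ℕ) : ZMod n)) =
      ∑ i ∈ range (n / 2), b i := by
    have h_reflect : ∑ j ∈ range (n / 4), b ((n / 2 - 1 - j : ℕ) : ZMod n) =
        ∑ j ∈ range (n / 4), b ((n / 4 + j : ℕ) : ZMod n) := by
      refine Eq.trans (sum_congr rfl fun j hj => ?_) (sum_range_reflect _ _)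
      rw [mem_range] at hj
      congr 2
      omega
    rw [sum_add_distrib, h_reflect, ← sum_range_add (fun i => b i),
      show n / 4 + n / 4 = n / 2 by omega]
  have h_second : ∑ j ∈ range (n / 4), (b ((2 * j : ℕ) : ZMod n) +
      b ((2 * j + 1 : ℕ) : ZMod n)) = ∑ i ∈ range (n / 2), b i := by
    rw [show n / 2 = 2 * (n / 4) by omega, sum_range_two_mul (fun i => b i)]
  rw [h_odd, sum_image fun _ _ _ _ h => by omega, sum_congr rfl h_term, sum_add_distrib, h_first,
    h_second, CharTwo.add_self_eq_zero]

lemma quadMap_mem_setH (h4 : 4 ∣ n) {b : ZMod n → ZMod 2} (hb : b ∈ setG n) :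
    quadMap n b ∈ setH n := by
  have hn : 4 ≤ n := Nat.le_of_dvd (Nat.pos_of_neZero n) h4
  have h2 : 2 ∣ n := dvd_trans (by norm_num) h4
  have h_half_ne : ((n / 2 : ℕ) : ZMod n) ≠ 0 := by
    exact_mod_cast ZMod.natCast_ne_natCast (n := n) (by omega) (by omega) (by omega : n / 2 ≠ 0)
  refine ⟨?_, ?_, fun i hi₁ hi₂ => ?_, sum_filter_odd_quadMap_eq_zero h4 hb⟩
  · rw [quadMap, zero_sub, ZMod.neg_one_eq_natCast_sub_one,
      sum_filter_two_mul_eq_odd h2 _ (by obtain ⟨m, hm⟩ := h4; exact ⟨2 * m - 1, by omega⟩),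
      hb.1, hb.2.1]
    rfl
  · have h_odd : Odd (n / 2 - 1) := by obtain ⟨m, hm⟩ := h4; exact ⟨m - 1, by omega⟩
    have h_symm : b ((n / 2 - 1 : ℕ) : ZMod n) = b ((n / 2 : ℕ) : ZMod n) := by
      rw [show n / 2 - 1 = n - 1 - n / 2 by omega, ZMod.natCast_sub_one_sub (by omega)]
      refine apply_neg_one_sub_of_mem_setG h2 hb h_half_ne ?_
      rw [ZMod.neg_one_eq_natCast_sub_one]
      exact ZMod.natCast_ne_natCast (by omega) (by omega) (by omega)
    rw [quadMap, ← Nat.cast_pred (by omega), sum_filter_two_mul_eq_odd h2 _ h_odd, zero_add,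
      h_symm, CharTwo.add_self_eq_zero]
  · rw [← cconv_cstar_eq_quadMap (cstar_apply_of_mem_setG h2 hb),
      ZMod.natCast_sub_of_le (by omega), cconv_cstar_neg]

lemma quadMap_injOn (hs : 2 ≤ s) (hn : n = 2 ^ s) : Set.InjOn (quadMap n) (setG n) := by
  intro b hb c hc h
  have h_sum : b + c = 0 := by
    refine eq_zero_of_quadMap_eq_zero hs hn ?_ ?_ ?_
    · rw [quadMap_add, h, CharTwo.add_self_eq_zero]
    · rw [Pi.add_apply, hb.1, hc.1, CharTwo.add_self_eq_zero]
    · have hb₂ := hb.2.2.1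
      have hc₂ := hc.2.2.1
      rw [Nat.cast_ofNat] at hb₂ hc₂
      rw [Pi.add_apply, hb₂, hc₂, add_zero]
  funext k
  exact CharTwo.add_eq_zero.1 (congrFun h_sum k)

end SquareMap

/-- Stores `a₂` in `b₁ = b_{n-2}` and `aᵢ` in `bᵢ = b_{n-1-i}` for `3 ≤ i ≤ n/2 - 1`; on `H`
the remaining coefficient `a₁` is fixed by the parity condition, so this is injective there. -/
def embedHG (n : ℕ) [NeZero n] (a : ZMod n → ZMod 2) (k : ZMod n) : ZMod 2 :=
  if k.val = 0 then 1
  else if min k.val (n - 1 - k.val) = 0 ∨ min k.val (n - 1 - k.val) = 2 then 0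
  else if min k.val (n - 1 - k.val) = 1 then a 2
  else a ((min k.val (n - 1 - k.val) : ℕ) : ZMod n)

section Embedding

variable {n : ℕ} [NeZero n]

lemma embedHG_natCast (a : ZMod n → ZMod 2) {v : ℕ} (hv : v < n) :
    embedHG n a v = if v = 0 then 1
      else if min v (n - 1 - v) = 0 ∨ min v (n - 1 - v) = 2 then 0
      else if min v (n - 1 - v) = 1 then a 2
      else a ((min v (n - 1 - v) : ℕ) : ZMod n) := by
  rw [embedHG, ZMod.val_cast_of_lt hv]

lemma embedHG_mem_setG (hn : 4 ≤ n) {a : ZMod n → ZMod 2} (ha : a ∈ setH n) :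
    embedHG n a ∈ setG n := by
  have h_two : embedHG n a ((2 : ℕ) : ZMod n) = 0 := by
    rw [embedHG_natCast a (show 2 < n by omega)]
    obtain rfl | h5 : n = 4 ∨ 5 ≤ n := by omega
    · simpa using ha.2.1
    · rw [if_neg (by omega), if_pos (by omega)]
  refine ⟨?_, ?_, h_two, ?_, fun i hi => ?_⟩
  · rw [embedHG, ZMod.val_zero, if_pos rfl]
  · rw [embedHG_natCast a (show n - 1 < n by omega), if_neg (by omega), if_pos (by omega)]
  · rw [embedHG_natCast a (show n - 3 < n by omega), if_neg (show n - 3 ≠ 0 by omega),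
      show min (n - 3) (n - 1 - (n - 3)) = min 2 (n - 1 - 2) by omega]
    rwa [embedHG_natCast a (show 2 < n by omega), if_neg (show 2 ≠ 0 by omega)] at h_two
  · have hi' : 1 ≤ i ∧ i ≤ n / 2 - 1 := by omega
    rw [embedHG_natCast a (show i < n by omega), embedHG_natCast a (show n - 1 - i < n by omega),
      show min (n - 1 - i) (n - 1 - (n - 1 - i)) = min i (n - 1 - i) by omega,
      if_neg (show i ≠ 0 by omega), if_neg (show n - 1 - i ≠ 0 by omega)]

lemma embedHG_injOn (hn : 4 ≤ n) (h2 : 2 ∣ n) : Set.InjOn (embedHG n) (setH n) := by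
  intro a ha a' ha' h
  have h_mid : ∀ i : ℕ, 2 ≤ i → i ≤ n / 2 - 1 → a i = a' i := by
    intro i hi₁ hi₂
    obtain rfl | hi₃ : i = 2 ∨ 3 ≤ i := by omega
    · have h₁ := congrFun h ((1 : ℕ) : ZMod n)
      rwa [embedHG_natCast a (show 1 < n by omega), embedHG_natCast a' (show 1 < n by omega),
        show min 1 (n - 1 - 1) = 1 by omega, if_neg one_ne_zero, if_neg (by omega),
        if_pos rfl, if_neg one_ne_zero, if_neg (by omega), if_pos rfl] at h₁
    · have hᵢ := congrFun h (i : ZMod n)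
      rwa [embedHG_natCast a (show i < n by omega), embedHG_natCast a' (show i < n by omega),
        show min i (n - 1 - i) = i by omega, if_neg (by omega), if_neg (by omega),
        if_neg (by omega), if_neg (by omega), if_neg (by omega), if_neg (by omega)] at hᵢ
  have h_one_mem : 1 ∈ (Ico 1 (n / 2)).filter (fun i => Odd i) := by
    simp only [mem_filter, mem_Ico]
    exact ⟨⟨le_rfl, by omega⟩, odd_one⟩
  have h_one : a 1 = a' 1 := by
    have h_par := ha.2.2.2
    have h_par' := ha'.2.2.2
    rw [← add_sum_erase _ _ h_one_mem, CharTwo.add_eq_zero] at h_par h_par'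
    rw [← Nat.cast_one, h_par, h_par']
    refine sum_congr rfl fun i hi => h_mid i ?_ ?_ <;>
    · simp only [mem_erase, mem_filter, mem_Ico, Nat.odd_iff] at hi
      omega
  have h_low : ∀ i : ℕ, 1 ≤ i → i ≤ n / 2 - 1 → a i = a' i := by
    intro i hi₁ hi₂
    obtain rfl | hi : i = 1 ∨ 2 ≤ i := by omega
    · exact_mod_cast h_one
    · exact h_mid i hi hi₂
  funext k
  rw [← ZMod.natCast_zmod_val k]
  have hk := ZMod.val_lt k
  obtain hk₀ | hk₁ | hk₂ | hk₃ : k.val = 0 ∨ (1 ≤ k.val ∧ k.val ≤ n / 2 - 1) ∨ k.val = n / 2 ∨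
      n / 2 + 1 ≤ k.val := by omega
  · rw [hk₀, Nat.cast_zero, ha.1, ha'.1]
  · exact h_low _ hk₁.1 hk₁.2
  · rw [hk₂, ha.2.1, ha'.2.1]
  · have h_refl := h_low (n - k.val) (by omega) (by omega)
    rwa [ha.2.2.1 _ (by omega) (by omega), ha'.2.2.1 _ (by omega) (by omega),
      Nat.sub_sub_self hk.le] at h_refl

end Embedding

theorem stmt_7 (n s : ℕ) [NeZero n] (hs : 2 ≤ s) (hn : n = 2 ^ s) :
    Set.BijOn (fun g => cconv n g (cstar n g))
      {b : ZMod n → ZMod 2 | b 0 = 1 ∧ b (((n - 1 : ℕ) : ZMod n)) = 0 ∧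
        b ((2 : ℕ) : ZMod n) = 0 ∧ b (((n - 3 : ℕ) : ZMod n)) = 0 ∧
        ∀ i : ℕ, (i = 1 ∨ (3 ≤ i ∧ i ≤ n / 2 - 1)) →
          b ((i : ℕ) : ZMod n) = b (((n - 1 - i : ℕ) : ZMod n))}
      {a : ZMod n → ZMod 2 | a 0 = 1 ∧ a ((n / 2 : ℕ) : ZMod n) = 0 ∧
        (∀ i : ℕ, 1 ≤ i → i ≤ n / 2 - 1 → a ((i : ℕ) : ZMod n) = a (((n - i : ℕ) : ZMod n))) ∧
        ∑ i ∈ (Finset.Ico 1 (n / 2)).filter (fun i => Odd i), a ((i : ℕ) : ZMod n) = 0} := by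
  have h4 : 4 ∣ n := hn ▸ pow_dvd_pow 2 hs
  have h4' : 4 ≤ n := Nat.le_of_dvd (Nat.pos_of_neZero n) h4
  have h2 : 2 ∣ n := dvd_trans (by norm_num) h4
  have h_bij : Set.BijOn (quadMap n) (setG n) (setH n) :=
    Set.bijOn_of_injOn_of_injOn_back (Set.toFinite _) (Set.toFinite _)
      (fun _ hb => quadMap_mem_setH h4 hb) (quadMap_injOn hs hn)
      (fun _ ha => embedHG_mem_setG h4' ha) (embedHG_injOn h4' h2)
  exact h_bij.congr fun b hb =>
    (cconv_cstar_eq_quadMap (cstar_apply_of_mem_setG h2 hb)).symm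
end

section
/- Let n = 2^s ≥ 4 and α ∈ F_{2^n} be a normal element of F_{2^n} over F_2. Let a_i = Tr_{2^n|2}(α^{1+2^i}) for 0 ≤ i ≤ n-1. Then a_0 = 1, a_{n/2} = 0, a_i = a_{n-i} for 1 ≤ i ≤ n/2-1, and Σ_{1 ≤ i ≤ n/2-1, i odd} a_i = 1. -/
open Polynomial Finset

open Module

/-!
Write `α_k = α ^ 2 ^ k` for `k : ZMod n`. The trace is invariant under Frobenius, so
`a_0 = Tr(α ^ 2) = Tr α`, which is `1` because `Tr α` is the sum of the normal basis; likewise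
`a_{n-i} = Tr((α α_{n-i}) ^ 2 ^ i) = a_i`, and `a_{n/2} = 0` since `α α_{n/2}` is fixed by
`x ↦ x ^ 2 ^ (n/2)`, making its trace twice a partial sum.

For the last claim let `u`, `v` be the sums of the `α_k` over odd and even `k`. Then
`u + v = Tr α = 1` and `u ^ 2 = v`, hence `u v = u + u ^ 2 = 1`. Expanding `v u` and grouping
the pairs `(j, k)` (`j` even, `k` odd) by `k - j = ± i` with `i` odd in `[1, n/2)`, which is
possible as `n/2` is even, gives `v u = ∑ a_i`.
-/

section FrobeniusOrbit

variable {M : Type*} [Monoid M] {q n : ℕ} {α : M}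

/-- `α ^ q ^ k` for `k : ZMod n`, through the representative `k.val`; once `α ^ q ^ n = α`
this agrees with `α ^ q ^ k` for every natural lift of `k` (`powOrbit_natCast`). -/
def powOrbit (q n : ℕ) (α : M) (k : ZMod n) : M := α ^ q ^ k.val

theorem powOrbit_natCast (hα : α ^ q ^ n = α) (k : ℕ) : powOrbit q n α k = α ^ q ^ k := by
  have hper : Function.IsPeriodicPt (· ^ q) n α := by
    simpa [Function.IsPeriodicPt, Function.IsFixedPt, pow_iterate] using hα
  simpa [powOrbit, ZMod.val_natCast, pow_iterate] using hper.iterate_mod_apply k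

theorem powOrbit_pow [NeZero n] (hα : α ^ q ^ n = α) (k : ZMod n) :
    powOrbit q n α k ^ q = powOrbit q n α (k + 1) := by
  rw [← ZMod.natCast_zmod_val k, ← Nat.cast_succ, powOrbit_natCast hα, powOrbit_natCast hα,
    pow_succ, pow_mul]

theorem powOrbit_pow_pow [NeZero n] (hα : α ^ q ^ n = α) (i : ℕ) (k : ZMod n) :
    powOrbit q n (α ^ q ^ i) k = powOrbit q n α (k + i) := by
  rw [← ZMod.natCast_zmod_val k, ← Nat.cast_add, powOrbit_natCast hα, powOrbit,
    ZMod.natCast_zmod_val, ← pow_mul, ← pow_add, add_comm]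

theorem powOrbit_mul {M : Type*} [CommMonoid M] (α β : M) (k : ZMod n) :
    powOrbit q n (α * β) k = powOrbit q n α k * powOrbit q n β k :=
  mul_pow α β _

end FrobeniusOrbit

theorem sum_range_eq_sum_zmod {n : ℕ} [NeZero n] {M : Type*} [AddCommMonoid M]
    (f : ZMod n → M) : ∑ k ∈ range n, f k = ∑ k, f k :=
  sum_nbij' (↑) ZMod.val (by simp) (by simp [ZMod.val_lt])
    (by simp +contextual [Nat.mod_eq_of_lt]) (by simp) (by simp)

section FiniteField

variable {F L : Type*} [Field F] [Fintype F] [Field L] [Algebra F L] [Finite L]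

theorem trace_pow_card_pow (x : L) (i : ℕ) :
    Algebra.trace F L (x ^ Fintype.card F ^ i) = Algebra.trace F L x := by
  induction i with
  | zero => simp
  | succ i ih =>
    rw [pow_succ, pow_mul, ← ih]
    exact Algebra.trace_eq_of_algEquiv (FiniteField.frobeniusAlgEquivOfAlgebraic F L) _

theorem pow_card_pow_finrank (x : L) : x ^ Fintype.card F ^ finrank F L = x := by
  have := Fintype.ofFinite L
  rw [← Module.card_eq_pow_finrank, FiniteField.pow_card]

theorem trace_ne_zero_of_basis_pow {n : ℕ} {α : L} (b : Basis (Fin n) F L)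
    (hb : ∀ i, b i = α ^ Fintype.card F ^ (i : ℕ)) : Algebra.trace F L α ≠ 0 := by
  intro h
  have hsum : ∑ i, b i = 0 := by
    have := FiniteField.algebraMap_trace_eq_sum_pow F L α
    rw [h, map_zero, finrank_eq_card_basis b, Fintype.card_fin, ← Fin.sum_univ_eq_sum_range,
      Nat.card_eq_fintype_card] at this
    simpa [hb] using this.symm
  have := b.index_nonempty
  exact one_ne_zero (Fintype.linearIndependent_iff.mp b.linearIndependent (fun _ => 1)
    (by simpa using hsum) (Classical.arbitrary _))

theorem trace_eq_zero_of_pow_card_pow_eq_self [CharP L 2] {m : ℕ} (hL : finrank F L = 2 * m)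
    {y : L} (hy : y ^ Fintype.card F ^ m = y) : Algebra.trace F L y = 0 := by
  apply (algebraMap F L).injective
  rw [FiniteField.algebraMap_trace_eq_sum_pow, hL, two_mul, sum_range_add, map_zero,
    Nat.card_eq_fintype_card]
  simp only [pow_add, pow_mul, hy]
  exact CharTwo.add_self_eq_zero _

theorem trace_mul_pow_card_pow_eq_zero [CharP L 2] {m : ℕ} (hL : finrank F L = 2 * m) (x : L) :
    Algebra.trace F L (x * x ^ Fintype.card F ^ m) = 0 := by
  refine trace_eq_zero_of_pow_card_pow_eq_self hL ?_
  rw [mul_pow, ← pow_mul, ← pow_add (Fintype.card F), ← two_mul, ← hL, pow_card_pow_finrank,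
    mul_comm]

theorem trace_mul_pow_card_pow_sub {i : ℕ} (hi : i ≤ finrank F L) (x : L) :
    Algebra.trace F L (x * x ^ Fintype.card F ^ (finrank F L - i)) =
      Algebra.trace F L (x * x ^ Fintype.card F ^ i) := by
  rw [← trace_pow_card_pow _ i, mul_pow, ← pow_mul, ← pow_add (Fintype.card F),
    Nat.sub_add_cancel hi, pow_card_pow_finrank, mul_comm]

theorem algebraMap_trace_eq_sum_powOrbit {n : ℕ} [NeZero n] (hL : finrank F L = n) (x : L) :
    algebraMap F L (Algebra.trace F L x) = ∑ k : ZMod n, powOrbit (Fintype.card F) n x k := by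
  have hx := pow_card_pow_finrank (F := F) x
  rw [hL] at hx
  rw [FiniteField.algebraMap_trace_eq_sum_pow, hL, Nat.card_eq_fintype_card,
    ← sum_range_eq_sum_zmod]
  simp only [powOrbit_natCast hx]

end FiniteField

section Parity

variable {n : ℕ} [NeZero n] (h2 : 2 ∣ n) {M : Type*} [AddCommMonoid M]

def parity : ZMod n →+* ZMod 2 := ZMod.castHom h2 (ZMod 2)

theorem parity_eq_one_iff (d : ZMod n) : parity h2 d = 1 ↔ Odd d.val := by
  rw [parity, ZMod.castHom_apply, ZMod.cast_eq_val, ZMod.natCast_eq_one_iff_odd]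

theorem sum_parity_add (f : ZMod n → M) (e : ZMod 2) (d : ZMod n) :
    ∑ k with parity h2 k = e, f (k + d) = ∑ k with parity h2 k = e + parity h2 d, f k :=
  sum_equiv (Equiv.addRight d) (by simp [map_add]) (fun _ _ => rfl)

theorem sum_parity_zero_add_sum_parity_one (f : ZMod n → M) :
    ∑ k with parity h2 k = 0, f k + ∑ k with parity h2 k = 1, f k = ∑ k, f k := by
  rw [← sum_fiberwise univ (parity h2) f]
  exact (Fin.sum_univ_two (fun j : ZMod 2 => ∑ i with parity h2 i = j, f i)).symm

theorem sum_parity_one_eq_sum_add_neg (h4 : 4 ∣ n) (g : ZMod n → M) :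
    ∑ d with parity h2 d = 1, g d = ∑ i ∈ (Ico 1 (n / 2)).filter Odd, (g i + g (-i)) := by
  have hval : ∀ i < n, (i : ZMod n).val = i := fun i hi => ZMod.val_natCast_of_lt hi
  have hlow : ∀ f : ZMod n → M, ∑ d with parity h2 d = 1 ∧ d.val < n / 2, f d =
      ∑ i ∈ (Ico 1 (n / 2)).filter Odd, f i := by
    intro f
    refine sum_nbij' ZMod.val (↑) ?_ ?_ (fun d _ => ZMod.natCast_zmod_val d) ?_
      (fun d _ => by rw [ZMod.natCast_zmod_val])
    · simp only [mem_filter, mem_univ, true_and, mem_Ico, parity_eq_one_iff]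
      exact fun d ⟨hd, hdm⟩ => ⟨⟨hd.pos, hdm⟩, hd⟩
    · simp only [mem_filter, mem_univ, true_and, mem_Ico, parity_eq_one_iff]
      intro i ⟨⟨_, him⟩, hi⟩
      rw [hval i (by omega)]
      exact ⟨hi, him⟩
    · simp only [mem_filter, mem_Ico]
      intro i ⟨⟨_, him⟩, _⟩
      exact hval i (by omega)
  have hneg : ∀ d : ZMod n, Odd d.val → (-d).val = n - d.val := by
    intro d hd
    have := hd.pos
    have := ZMod.val_lt d
    rw [ZMod.neg_val', Nat.mod_eq_of_lt (by omega)]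
  have hhigh : ∑ d with parity h2 d = 1 ∧ ¬ d.val < n / 2, g d =
      ∑ d with parity h2 d = 1 ∧ d.val < n / 2, g (-d) := by
    refine sum_nbij' Neg.neg Neg.neg ?_ ?_ (fun d _ => neg_neg d) (fun d _ => neg_neg d)
      (fun d _ => by rw [neg_neg])
    all_goals
      simp only [mem_filter, mem_univ, true_and, parity_eq_one_iff]
      intro d ⟨hd, hdm⟩
      have hdn := ZMod.val_lt d
      rw [hneg d hd]
      rw [Nat.odd_iff] at hd ⊢
      omega
  rw [sum_add_distrib, ← hlow, ← hlow (fun d => g (-d)), ← hhigh, ← filter_filter,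
    ← filter_filter, sum_filter_add_sum_filter_not]

theorem sum_parity_zero_mul_sum_parity_one (h4 : 4 ∣ n) {R : Type*} [CommSemiring R]
    (c : ZMod n → R) :
    (∑ k with parity h2 k = 0, c k) * (∑ k with parity h2 k = 1, c k) =
      ∑ i ∈ (Ico 1 (n / 2)).filter Odd, ∑ k, c k * c (k + i) := by
  have hneg : ∀ i ∈ (Ico 1 (n / 2)).filter Odd,
      ∑ j with parity h2 j = 0, c j * c (j + -i) =
        ∑ k with parity h2 k = 1, c k * c (k + i) := by
    intro i hi
    have hi : parity h2 (i : ZMod n) = 1 := by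
      rw [map_natCast, ZMod.natCast_eq_one_iff_odd]
      exact (mem_filter.1 hi).2
    have := sum_parity_add h2 (fun j => c j * c (j + -i)) 1 i
    rw [hi, CharTwo.add_self_eq_zero] at this
    simp only [← this, add_neg_cancel_right, mul_comm]
  calc _ = ∑ j with parity h2 j = 0, ∑ d with parity h2 d = 1, c j * c (j + d) := by
        rw [sum_mul_sum]
        refine sum_congr rfl fun j hj => ?_
        have := sum_parity_add h2 (fun k => c j * c k) 1 j
        rw [(mem_filter.1 hj).2, add_zero] at this
        simp only [add_comm j, this]
    _ = ∑ d with parity h2 d = 1, ∑ j with parity h2 j = 0, c j * c (j + d) := sum_comm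
    _ = _ := by
        rw [sum_parity_one_eq_sum_add_neg h2 h4]
        refine sum_congr rfl fun i hi => ?_
        rw [hneg i hi, sum_parity_zero_add_sum_parity_one]

end Parity

theorem sum_trace_mul_pow_odd_eq_one {K : Type*} [Field K] [Algebra (ZMod 2) K] [Finite K]
    [CharP K 2] {n : ℕ} [NeZero n] (hK : finrank (ZMod 2) K = n) (h4 : 4 ∣ n) {α : K}
    (htr : Algebra.trace (ZMod 2) K α = 1) :
    ∑ i ∈ (Ico 1 (n / 2)).filter Odd, Algebra.trace (ZMod 2) K (α * α ^ 2 ^ i) = 1 := by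
  have h2 : 2 ∣ n := dvd_trans (by norm_num) h4
  have hαn : α ^ 2 ^ n = α := by simpa [hK] using pow_card_pow_finrank (F := ZMod 2) α
  have hsum (x : K) : algebraMap (ZMod 2) K (Algebra.trace (ZMod 2) K x) =
      ∑ k : ZMod n, powOrbit 2 n x k := by
    simpa using algebraMap_trace_eq_sum_powOrbit (F := ZMod 2) hK x
  set u := ∑ k with parity h2 k = 1, powOrbit 2 n α k
  set v := ∑ k with parity h2 k = 0, powOrbit 2 n α k
  have huv : u + v = 1 := by
    rw [add_comm, sum_parity_zero_add_sum_parity_one, ← hsum, htr, map_one]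
  have hu2 : u ^ 2 = v := by
    simp only [u, v, sum_pow_char, powOrbit_pow hαn, sum_parity_add h2 _ 1 1, map_one,
      CharTwo.add_self_eq_zero]
  have hvu : v * u = 1 := by
    linear_combination (u - 1) * huv - hu2 + (u - 1) * CharTwo.two_eq_zero (R := K)
  apply (algebraMap (ZMod 2) K).injective
  rw [map_sum, map_one, ← hvu, sum_parity_zero_mul_sum_parity_one h2 h4]
  refine sum_congr rfl fun i _ => ?_
  rw [hsum]
  simp only [powOrbit_mul, powOrbit_pow_pow hαn]

theorem stmt_9_general (n s : ℕ) (hs : 2 ≤ s) (hn : n = 2 ^ s)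
    (K : Type*) [Field K] [Algebra (ZMod 2) K] [FiniteDimensional (ZMod 2) K]
    (α : K) (hα : ∃ b : Module.Basis (Fin n) (ZMod 2) K, ∀ i : Fin n, b i = α ^ 2 ^ (i : ℕ))
    (a : ℕ → ZMod 2)
    (ha : ∀ i : ℕ, a i = Algebra.trace (ZMod 2) K (α * α ^ 2 ^ i)) :
    a 0 = 1 ∧ a (n / 2) = 0 ∧
      (∀ i : ℕ, 1 ≤ i → i ≤ n / 2 - 1 → a i = a (n - i)) ∧
      ∑ i ∈ (Finset.Ico 1 (n / 2)).filter (fun i => Odd i), a i = 1 := by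
  obtain ⟨b, hb⟩ := hα
  have : Finite K := Module.finite_of_finite (ZMod 2)
  have : CharP K 2 := charP_of_injective_algebraMap (algebraMap (ZMod 2) K).injective 2
  have hK : finrank (ZMod 2) K = n := by simpa using finrank_eq_card_basis b
  have h4 : 4 ∣ n := hn ▸ pow_dvd_pow 2 hs
  have : NeZero n := ⟨hn ▸ pow_ne_zero s two_ne_zero⟩
  have htr : Algebra.trace (ZMod 2) K α = 1 :=
    (by decide : ∀ t : ZMod 2, t ≠ 0 → t = 1) _
      (trace_ne_zero_of_basis_pow b (by simpa using hb))
  simp only [ha]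
  refine ⟨?_, ?_, fun i _ hi => ?_, sum_trace_mul_pow_odd_eq_one hK h4 htr⟩
  · rw [pow_zero, pow_one, ← sq, ← htr]
    simpa using trace_pow_card_pow (F := ZMod 2) α 1
  · simpa using trace_mul_pow_card_pow_eq_zero (F := ZMod 2) (m := n / 2) (by omega) α
  · have hi : i ≤ finrank (ZMod 2) K := by omega
    simpa [hK] using (trace_mul_pow_card_pow_sub (F := ZMod 2) hi α).symm

theorem stmt_9 (n s : ℕ) (hs : 2 ≤ s) (hn : n = 2 ^ s)
    (K : Type*) [Field K] [Algebra (ZMod 2) K] [FiniteDimensional (ZMod 2) K]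
    (hK : Module.finrank (ZMod 2) K = n)
    (α : K) (hα : ∃ b : Module.Basis (Fin n) (ZMod 2) K, ∀ i : Fin n, b i = α ^ 2 ^ (i : ℕ))
    (a : ℕ → ZMod 2)
    (ha : ∀ i : ℕ, a i = Algebra.trace (ZMod 2) K (α * α ^ 2 ^ i)) :
    a 0 = 1 ∧ a (n / 2) = 0 ∧
      (∀ i : ℕ, 1 ≤ i → i ≤ n / 2 - 1 → a i = a (n - i)) ∧
      ∑ i ∈ (Finset.Ico 1 (n / 2)).filter (fun i => Odd i), a i = 1 :=
  stmt_9_general n s hs hn K α hα a ha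
end

section
/- Let n be odd and h(z) = Σ_{i=0}^{n-1} a_i z^i ∈ F_2[z]/(z^n-1). Then h(z) = g(z)·g*(z) in F_2[z]/(z^n-1) for some g if and only if h is symmetric (a_i = a_{n-i} for all 1 ≤ i ≤ n-1). Moreover, when h is symmetric, an explicit factorization is given by g(z) = Σ_{i=0}^{n-1} a_{2i mod n} z^i, which satisfies g = g* and g^2 = h in F_2[z]/(z^n-1). -/
open Polynomial Finset

lemma aux_sq {n : ℕ} [NeZero n] (hn : Odd n) (a : ZMod n → ZMod 2) :
    cconv n (fun i : ZMod n => a (2 * i)) (fun i : ZMod n => a (2 * i)) = a := by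
  have h2 : IsUnit (2 : ZMod n) := by
    have := (ZMod.isUnit_iff_coprime 2 n).2 (Nat.coprime_two_left.2 hn)
    simpa using this
  obtain ⟨m, hm⟩ := h2.exists_right_inv
  funext k
  have hmk : (2 : ZMod n) * (m * k) = k := by rw [← mul_assoc, hm, one_mul]
  have hcancel : ∀ x : ZMod n, (2 : ZMod n) * x = k → x = m * k := by
    intro x hx
    have : m * (2 * x) = m * k := by rw [hx]
    rwa [← mul_assoc, mul_comm m 2, hm, one_mul] at this
  show (∑ i : ZMod n, a (2 * i) * a (2 * (k - i))) = a k
  rw [Finset.sum_eq_add_sum_sdiff_singleton_of_mem (Finset.mem_univ (m * k))]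
  have hfix : a (2 * (m * k)) * a (2 * (k - m * k)) = a k := by
    have : (2 : ZMod n) * (k - m * k) = k := by rw [mul_sub, hmk]; ring
    rw [hmk, this]
    have : ∀ x : ZMod 2, x * x = x := by decide
    exact this _
  have hzero : ∑ i ∈ Finset.univ \ {m * k}, a (2 * i) * a (2 * (k - i)) = 0 := by
    apply Finset.sum_involution (g := fun i _ => k - i)
    · intro i _
      have : a (2 * (k - i)) * a (2 * (k - (k - i))) = a (2 * i) * a (2 * (k - i)) := by
        rw [sub_sub_cancel, mul_comm]
      rw [this]
      exact CharTwo.add_self_eq_zero _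
    · intro i hi _
      simp only [Finset.mem_sdiff, Finset.mem_singleton] at hi
      intro h
      apply hi.2
      apply hcancel
      linear_combination -h
    · intro i hi
      simp only [Finset.mem_sdiff, Finset.mem_univ, Finset.mem_singleton, true_and] at hi ⊢
      intro h
      apply hi
      apply hcancel
      linear_combination (-2 : ZMod n)*h - hmk
    · intro i _
      exact sub_sub_cancel k i
  rw [hfix, hzero, add_zero]

theorem stmt_11 (n : ℕ) [NeZero n] (hn : Odd n)
    (a : ZMod n → ZMod 2) :
    ((∃ g : ZMod n → ZMod 2, a = cconv n g (cstar n g)) ↔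
        (∀ i : ZMod n, a i = a (-i))) ∧
      ((∀ i : ZMod n, a i = a (-i)) →
        (cstar n (fun i : ZMod n => a (2 * i)) = (fun i : ZMod n => a (2 * i)) ∧
          cconv n (fun i : ZMod n => a (2 * i)) (fun i : ZMod n => a (2 * i)) = a ∧
          cconv n (fun i : ZMod n => a (2 * i)) (cstar n (fun i : ZMod n => a (2 * i))) = a)) := by
  have moreover : (∀ i : ZMod n, a i = a (-i)) →
      (cstar n (fun i : ZMod n => a (2 * i)) = (fun i : ZMod n => a (2 * i)) ∧
        cconv n (fun i : ZMod n => a (2 * i)) (fun i : ZMod n => a (2 * i)) = a ∧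
        cconv n (fun i : ZMod n => a (2 * i)) (cstar n (fun i : ZMod n => a (2 * i))) = a) := by
    intro hs
    have hstar : cstar n (fun i : ZMod n => a (2 * i)) = (fun i : ZMod n => a (2 * i)) := by
      funext i
      show a (2 * (-i)) = a (2 * i)
      rw [mul_neg, ← hs]
    refine ⟨hstar, aux_sq hn a, ?_⟩
    rw [hstar]; exact aux_sq hn a
  refine ⟨⟨?_, fun hs => ⟨_, ((moreover hs).2.2).symm⟩⟩, moreover⟩
  rintro ⟨g, rfl⟩ i
  show (∑ j : ZMod n, g j * cstar n g (i - j)) = ∑ j : ZMod n, g j * cstar n g (-i - j)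
  simp only [cstar]
  apply Fintype.sum_equiv (Equiv.subRight i)
  intro j
  simp only [Equiv.subRight_apply]
  have h1 : -(i - j) = j - i := by ring
  have h2 : -(-i - (j - i)) = j := by ring
  rw [h1, h2, mul_comm]
end

section
/- Let n = 2^s·m with 2^s ≥ 4, gcd(2^s, m) = 1 (m odd). Suppose α is a normal element of F_{2^{2^s}} over F_2 with corresponding vector (a_0,...,a_{2^s-1}) and β is a normal element of F_{2^m} over F_2 with corresponding vector (b_0,...,b_{m-1}). Then γ = αβ is a normal element of F_{2^n} over F_2, and its corresponding vector (c_0,...,c_{n-1}) satisfies c_k = a_{k mod 2^s} · b_{k mod m} for all 0 ≤ k ≤ n-1. -/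
open Polynomial Finset

/-!
Over a finite field `F` with `q` elements, put `γ = xy` with `x ∈ L`, `y ∈ M` of coprime degrees
`p`, `r` and `[K : F] = pr`. Since `x ^ q ^ p = x` and `y ^ q ^ r = y`, the Frobenius orbit of `γ`
is `γ ^ q ^ k = x ^ q ^ (k % p) * y ^ q ^ (k % r)`, and by the Chinese remainder theorem
`k ↦ (k % p, k % r)` runs once through all pairs. Hence the orbit of `γ` is the family of products
of the orbits of `x` and `y`, which is linearly independent because fields of coprime degrees are
linearly disjoint; and `Tr_K (xy) = ∑_k (xy) ^ q ^ k` splits as `Tr_L x * Tr_M y`.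
-/

open Module

theorem Nat.bijective_mod_mod_of_coprime {p q : ℕ} (hp : 0 < p) (hq : 0 < q) (h : p.Coprime q) :
    Function.Bijective fun j : Fin (p * q) =>
      ((⟨j % p, Nat.mod_lt _ hp⟩ : Fin p), (⟨j % q, Nat.mod_lt _ hq⟩ : Fin q)) := by
  rw [Fintype.bijective_iff_injective_and_card]
  refine ⟨fun j₁ j₂ hj => ?_, by simp⟩
  simp only [Prod.mk.injEq, Fin.mk.injEq] at hj
  have hmod : (j₁ : ℕ) ≡ j₂ [MOD p * q] := (Nat.modEq_and_modEq_iff_modEq_mul h).1 hj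
  exact Fin.ext (by rwa [Nat.ModEq, Nat.mod_eq_of_lt j₁.isLt, Nat.mod_eq_of_lt j₂.isLt] at hmod)

theorem Finset.sum_range_mul_mod_mod_of_coprime {R : Type*} [AddCommMonoid R] {p q : ℕ}
    (hp : 0 < p) (hq : 0 < q) (h : p.Coprime q) (f : ℕ → ℕ → R) :
    ∑ j ∈ Finset.range (p * q), f (j % p) (j % q) =
      ∑ u ∈ Finset.range p, ∑ v ∈ Finset.range q, f u v := by
  simp only [← Fin.sum_univ_eq_sum_range]
  rw [← Fintype.sum_prod_type']
  exact Fintype.sum_bijective _ (Nat.bijective_mod_mod_of_coprime hp hq h) _ _ fun _ => rfl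

theorem FiniteField.pow_natCard_pow_mod_finrank {F L : Type*} [Field F] [Finite F] [Field L]
    [Algebra F L] [Module.Finite F L] (x : L) (t : ℕ) :
    x ^ Nat.card F ^ t = x ^ Nat.card F ^ (t % finrank F L) := by
  have : Finite L := Module.finite_of_finite F
  have : Fintype L := Fintype.ofFinite L
  have hcard : Fintype.card L = Nat.card F ^ finrank F L := by
    rw [← Nat.card_eq_fintype_card, Module.natCard_eq_pow_finrank (K := F)]
  conv_lhs => rw [← Nat.mod_add_div t (finrank F L)]
  rw [pow_add, pow_mul, pow_mul, ← hcard, FiniteField.pow_card_pow]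

theorem FiniteField.algebraMap_mul_algebraMap_pow {F K L M : Type*} [Field F] [Finite F]
    [Field K] [Field L] [Field M] [Algebra F L] [Algebra F M] [Algebra L K] [Algebra M K]
    [Module.Finite F L] [Module.Finite F M] (x : L) (y : M) (t : ℕ) :
    (algebraMap L K x * algebraMap M K y) ^ Nat.card F ^ t =
      algebraMap L K (x ^ Nat.card F ^ (t % finrank F L)) *
        algebraMap M K (y ^ Nat.card F ^ (t % finrank F M)) := by
  rw [mul_pow, ← map_pow, ← map_pow, pow_natCard_pow_mod_finrank x, pow_natCard_pow_mod_finrank y]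

theorem FiniteField.trace_algebraMap_mul_algebraMap {F K L M : Type*} [Field F] [Finite F]
    [Field K] [Field L] [Field M] [Algebra F K] [Algebra F L] [Algebra F M] [Algebra L K]
    [Algebra M K] [IsScalarTower F L K] [IsScalarTower F M K]
    [Module.Finite F K] [Module.Finite F L] [Module.Finite F M]
    (hK : finrank F K = finrank F L * finrank F M) (h : (finrank F L).Coprime (finrank F M))
    (x : L) (y : M) :
    Algebra.trace F K (algebraMap L K x * algebraMap M K y) =
      Algebra.trace F L x * Algebra.trace F M y := by
  have : Finite K := Module.finite_of_finite F
  have : Finite L := Module.finite_of_finite F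
  have : Finite M := Module.finite_of_finite F
  apply (algebraMap F K).injective
  rw [algebraMap_trace_eq_sum_pow, hK, map_mul, IsScalarTower.algebraMap_apply F L K,
    IsScalarTower.algebraMap_apply F M K, algebraMap_trace_eq_sum_pow,
    algebraMap_trace_eq_sum_pow, map_sum, map_sum, Finset.sum_mul_sum,
    ← Finset.sum_range_mul_mod_mod_of_coprime finrank_pos finrank_pos h]
  refine Finset.sum_congr rfl fun j _ => ?_
  rw [algebraMap_mul_algebraMap_pow, ← pow_natCard_pow_mod_finrank, ← pow_natCard_pow_mod_finrank]

theorem FiniteField.linearIndependent_pow_algebraMap_mul_algebraMap {F K L M : Type*} [Field F]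
    [Finite F] [Field K] [Field L] [Field M] [Algebra F K] [Algebra F L] [Algebra F M]
    [Algebra L K] [Algebra M K] [IsScalarTower F L K] [IsScalarTower F M K]
    [Module.Finite F L] [Module.Finite F M] {p r : ℕ} (hL : finrank F L = p)
    (hM : finrank F M = r) (h : p.Coprime r) {x : L} {y : M}
    (hx : LinearIndependent F fun i : Fin p => x ^ Nat.card F ^ (i : ℕ))
    (hy : LinearIndependent F fun j : Fin r => y ^ Nat.card F ^ (j : ℕ)) :
    LinearIndependent F fun k : Fin (p * r) =>
      (algebraMap L K x * algebraMap M K y) ^ Nat.card F ^ (k : ℕ) := by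
  subst hL hM
  let e := AlgEquiv.ofInjectiveField (IsScalarTower.toAlgHom F L K)
  have hdisj : (IsScalarTower.toAlgHom F L K).fieldRange.LinearDisjoint M :=
    .of_finrank_coprime (e.toLinearEquiv.finrank_eq.symm ▸ h)
  have hprod := (hdisj.linearIndependent_mul' (hx.map' _ e.toLinearEquiv.ker) hy).comp _
    (Nat.bijective_mod_mod_of_coprime finrank_pos finrank_pos h).injective
  convert hprod using 1
  funext k
  exact algebraMap_mul_algebraMap_pow x y k

theorem stmt_17_general (s m n : ℕ) (hm : Odd m) (hn : n = 2 ^ s * m)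
    (L M K : Type*) [Field L] [Field M] [Field K]
    [Algebra (ZMod 2) L] [Algebra (ZMod 2) M] [Algebra (ZMod 2) K]
    [Algebra L K] [Algebra M K]
    [IsScalarTower (ZMod 2) L K] [IsScalarTower (ZMod 2) M K]
    [FiniteDimensional (ZMod 2) L] [FiniteDimensional (ZMod 2) M]
    [FiniteDimensional (ZMod 2) K]
    (hK : Module.finrank (ZMod 2) K = n) (hL : Module.finrank (ZMod 2) L = 2 ^ s)
    (hM : Module.finrank (ZMod 2) M = m)
    (α : L) (β : M)
    (hα : ∃ b : Module.Basis (Fin (2 ^ s)) (ZMod 2) L, ∀ i : Fin (2 ^ s), b i = α ^ 2 ^ (i : ℕ))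
    (hβ : ∃ b : Module.Basis (Fin m) (ZMod 2) M, ∀ i : Fin m, b i = β ^ 2 ^ (i : ℕ)) :
    (∃ b : Module.Basis (Fin n) (ZMod 2) K,
        ∀ i : Fin n, b i = (algebraMap L K α * algebraMap M K β) ^ 2 ^ (i : ℕ)) ∧
      ∀ k < n,
        Algebra.trace (ZMod 2) K
            ((algebraMap L K α * algebraMap M K β) *
              (algebraMap L K α * algebraMap M K β) ^ 2 ^ k)
          = Algebra.trace (ZMod 2) L (α * α ^ 2 ^ (k % 2 ^ s)) *
              Algebra.trace (ZMod 2) M (β * β ^ 2 ^ (k % m)) := by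
  subst hn
  have hcop : (2 ^ s).Coprime m := .pow_left s (Nat.coprime_two_left.mpr hm)
  have h2 : Nat.card (ZMod 2) = 2 := Nat.card_zmod 2
  constructor
  · obtain ⟨bL, hbL⟩ := hα
    obtain ⟨bM, hbM⟩ := hβ
    have hγ := FiniteField.linearIndependent_pow_algebraMap_mul_algebraMap (K := K) hL hM hcop
      (x := α) (y := β) (by simpa only [h2, ← hbL] using bL.linearIndependent)
      (by simpa only [h2, ← hbM] using bM.linearIndependent)
    rw [h2] at hγ
    exact ⟨basisOfLinearIndependentOfCardEqFinrank' _ hγ (by simp [hK]), fun i => by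
      simp [basisOfLinearIndependentOfCardEqFinrank']⟩
  · intro k _
    have hγ := FiniteField.algebraMap_mul_algebraMap_pow (F := ZMod 2) (K := K) α β k
    rw [h2, hL, hM] at hγ
    rw [hγ, ← mul_mul_mul_comm, ← map_mul, ← map_mul,
      FiniteField.trace_algebraMap_mul_algebraMap (by rw [hK, hL, hM]) (by rwa [hL, hM])]

theorem stmt_17 (s m n : ℕ) (hs : 2 ≤ s) (hm : Odd m) (hn : n = 2 ^ s * m)
    (L M K : Type*) [Field L] [Field M] [Field K]
    [Algebra (ZMod 2) L] [Algebra (ZMod 2) M] [Algebra (ZMod 2) K]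
    [Algebra L K] [Algebra M K]
    [IsScalarTower (ZMod 2) L K] [IsScalarTower (ZMod 2) M K]
    [FiniteDimensional (ZMod 2) L] [FiniteDimensional (ZMod 2) M]
    [FiniteDimensional (ZMod 2) K]
    (hK : Module.finrank (ZMod 2) K = n) (hL : Module.finrank (ZMod 2) L = 2 ^ s)
    (hM : Module.finrank (ZMod 2) M = m)
    (α : L) (β : M)
    (hα : ∃ b : Module.Basis (Fin (2 ^ s)) (ZMod 2) L, ∀ i : Fin (2 ^ s), b i = α ^ 2 ^ (i : ℕ))
    (hβ : ∃ b : Module.Basis (Fin m) (ZMod 2) M, ∀ i : Fin m, b i = β ^ 2 ^ (i : ℕ)) :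
    (∃ b : Module.Basis (Fin n) (ZMod 2) K,
        ∀ i : Fin n, b i = (algebraMap L K α * algebraMap M K β) ^ 2 ^ (i : ℕ)) ∧
      ∀ k < n,
        Algebra.trace (ZMod 2) K
            ((algebraMap L K α * algebraMap M K β) *
              (algebraMap L K α * algebraMap M K β) ^ 2 ^ k)
          = Algebra.trace (ZMod 2) L (α * α ^ 2 ^ (k % 2 ^ s)) *
              Algebra.trace (ZMod 2) M (β * β ^ 2 ^ (k % m)) :=
  stmt_17_general s m n hm hn L M K hK hL hM α β hα hβ
end

section
/- Let n = 2^s with s ≥ 4. Consider the F_2-linear system in variables z_3,...,z_{n/2-1}: y_j = z_j + z_{j-1} for even j with 4 ≤ j ≤ n/2-2; y_3 = z_3 + z_{(n-4)/2}; y_5 = z_5 + z_4 + z_{(n-6)/2}; and y_j = z_j + z_{j-1} + z_{(n-1-j)/2} + z_{(j-1)/2} for odd j with 7 ≤ j ≤ n/2-1. Then this linear map from F_2^{n/2-3} to F_2^{n/2-3} is a bijection (equivalently, the homogeneous system has only the zero solution). -/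
open Polynomial Finset

lemma zm2_eq : ∀ a b : ZMod 2, a + b = 0 → a = b := by decide

lemma zm2_abb : ∀ a b : ZMod 2, a + b + b = 0 → a = 0 := by decide

lemma zm2_pair : ∀ a b c d e : ZMod 2, a + b + c + d = 0 →
    e + a + c + d = 0 → e = b := by decide

lemma zm2_abcc : ∀ a b c : ZMod 2, a + b + c + c = 0 → b = 0 → a = 0 := by decide

lemma zm2_four : ∀ a b c d : ZMod 2, a + b + c + d = 0 → b = 0 → c = 0 →
    d = 0 → a = 0 := by decide

theorem stmt_19 (n s : ℕ) (hs : 4 ≤ s) (hn : n = 2 ^ s)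
    (z : ℕ → ZMod 2)
    (heven : ∀ j : ℕ, 4 ≤ j → j ≤ n / 2 - 2 → Even j → z j + z (j - 1) = 0)
    (h3 : z 3 + z ((n - 4) / 2) = 0)
    (h5 : z 5 + z 4 + z ((n - 6) / 2) = 0)
    (hodd : ∀ j : ℕ, 7 ≤ j → j ≤ n / 2 - 1 → Odd j →
      z j + z (j - 1) + z ((n - 1 - j) / 2) + z ((j - 1) / 2) = 0) :
    ∀ j : ℕ, 3 ≤ j → j ≤ n / 2 - 1 → z j = 0 := by
  set m := 2 ^ (s - 1) with hmdef
  have hnm : n = 2 * m := by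
    rw [hn, hmdef, ← pow_succ']
    congr 1
    omega
  obtain ⟨q, hq, hq1⟩ : ∃ q, m = 8 * q ∧ 1 ≤ q := by
    refine ⟨2 ^ (s - 4), ?_, Nat.one_le_two_pow⟩
    rw [hmdef, show (8 : ℕ) = 2 ^ 3 by norm_num, ← pow_add]
    congr 1
    omega
  -- restated hypotheses
  have hev : ∀ j : ℕ, 4 ≤ j → j ≤ m - 2 → j % 2 = 0 → z j = z (j - 1) := by
    intro j h1 h2 h3
    exact zm2_eq _ _ (heven j h1 (by omega) ⟨j / 2, by omega⟩)
  have h3' : z 3 + z (m - 2) = 0 := by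
    rwa [show (n - 4) / 2 = m - 2 by omega] at h3
  have h5' : z 5 + z 4 + z (m - 3) = 0 := by
    rwa [show (n - 6) / 2 = m - 3 by omega] at h5
  have hodd' : ∀ j : ℕ, 7 ≤ j → j ≤ m - 1 → j % 2 = 1 →
      z j + z (j - 1) + z (m - (j + 1) / 2) + z ((j - 1) / 2) = 0 := by
    intro j h1 h2 h3
    have := hodd j h1 (by omega) ⟨j / 2, by omega⟩
    rwa [show (n - 1 - j) / 2 = m - (j + 1) / 2 by omega] at this
  -- z 5 = 0
  have e3 : z 4 = z 3 := by simpa using hev 4 (by omega) (by omega) (by omega)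
  have e1 : z 3 = z (m - 2) := zm2_eq _ _ h3'
  have e2 : z (m - 2) = z (m - 3) := by
    simpa [show m - 2 - 1 = m - 3 by omega] using hev (m - 2) (by omega) (by omega) (by omega)
  have h5z : z 5 = 0 := by
    apply zm2_abb (b := z (m - 3))
    calc z 5 + z (m - 3) + z (m - 3) = z 5 + z 4 + z (m - 3) := by
          rw [e3, e1, e2]
      _ = 0 := h5'
  -- chain step
  have hchain : ∀ c : ℕ, 2 ≤ c → 4 * c + 1 ≤ m - 1 → z (4 * c + 1) = z (4 * c - 3) := by
    intro c hc hcm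
    have A := hodd' (4 * c - 1) (by omega) (by omega) (by omega)
    have B := hodd' (4 * c + 1) (by omega) (by omega) (by omega)
    rw [show (4 * c - 1 + 1) / 2 = 2 * c by omega,
      show (4 * c - 1 - 1) / 2 = 2 * c - 1 by omega,
      show 4 * c - 1 - 1 = 4 * c - 2 by omega] at A
    rw [show (4 * c + 1 + 1) / 2 = 2 * c + 1 by omega,
      show (4 * c + 1 - 1) / 2 = 2 * c by omega, show 4 * c + 1 - 1 = 4 * c by omega,
      show m - (2 * c + 1) = m - 2 * c - 1 by omega] at B
    have hA1 : z (4 * c - 2) = z (4 * c - 3) := by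
      simpa [show 4 * c - 2 - 1 = 4 * c - 3 by omega] using
        hev (4 * c - 2) (by omega) (by omega) (by omega)
    have hB1 : z (4 * c) = z (4 * c - 1) := by
      simpa [show 4 * c - 1 = 4 * c - 1 by omega] using hev (4 * c) (by omega) (by omega) (by omega)
    have hA2 : z (m - 2 * c) = z (m - 2 * c - 1) := by
      simpa using hev (m - 2 * c) (by omega) (by omega) (by omega)
    have hA3 : z (2 * c) = z (2 * c - 1) := by
      simpa using hev (2 * c) (by omega) (by omega) (by omega)
    rw [hA1, hA2] at A
    rw [hB1, hA3] at B
    exact zm2_pair _ _ _ _ _ A B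
  -- all indices ≡ 1 mod 4
  have h1m4 : ∀ c : ℕ, 1 ≤ c → 4 * c + 1 ≤ m - 1 → z (4 * c + 1) = 0 := by
    intro c hc
    induction c, hc using Nat.le_induction with
    | base => intro _; simpa using h5z
    | succ k hk ih =>
      intro hbnd
      have h := hchain (k + 1) (by omega) (by omega)
      rw [show 4 * (k + 1) - 3 = 4 * k + 1 by omega] at h
      rw [h]
      exact ih (by omega)
  have hzm3 : z (m - 3) = 0 := by
    have := h1m4 (2 * q - 1) (by omega) (by omega)
    rwa [show 4 * (2 * q - 1) + 1 = m - 3 by omega] at this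
  have hz3 : z 3 = 0 := by rw [e1, e2]; exact hzm3
  -- main induction on 2-adic valuation of t+1
  have H : ∀ k : ℕ, ∀ t : ℕ, t % 2 = 1 → 3 ≤ t → t ≤ m - 1 → ¬ (2 ^ (k + 2) ∣ (t + 1)) →
      z t = 0 := by
    intro k
    induction k with
    | zero =>
      intro t ht2 ht3 htm hdvd
      have h4 : ¬ (4 ∣ (t + 1)) := by simpa using hdvd
      have ht4 : t % 4 = 1 := by omega
      have := h1m4 (t / 4) (by omega) (by omega)
      rwa [show 4 * (t / 4) + 1 = t by omega] at this
    | succ k ih =>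
      intro t ht2 ht3 htm hdvd
      by_cases hdk : 2 ^ (k + 2) ∣ (t + 1)
      · have h4 : (4 : ℕ) ∣ (t + 1) := by
          refine dvd_trans ?_ hdk
          have : (4 : ℕ) = 2 ^ 2 := by norm_num
          rw [this]
          exact pow_dvd_pow 2 (by omega)
        by_cases h3c : t = 3
        · rw [h3c]; exact hz3
        by_cases hm1 : t = m - 1
        · subst hm1
          have E := hodd' (m - 1) (by omega) le_rfl (by omega)
          rw [show (m - 1 + 1) / 2 = 4 * q by omega, show (m - 1 - 1) / 2 = 4 * q - 1 by omega,
            show m - 1 - 1 = m - 2 by omega, show m - 4 * q = 4 * q by omega] at E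
          have hev4q : z (4 * q) = z (4 * q - 1) := by
            simpa using hev (4 * q) (by omega) (by omega) (by omega)
          rw [hev4q] at E
          exact zm2_abcc _ _ _ E (e2 ▸ hzm3)
        · have ht7 : 7 ≤ t := by omega
          have htm3 : t ≤ m - 3 := by omega
          have E := hodd' t ht7 (by omega) ht2
          -- z (t-1) = 0
          have z1 : z (t - 1) = 0 := by
            have he : z (t - 1) = z (t - 2) := by
              simpa [show t - 1 - 1 = t - 2 by omega] using
                hev (t - 1) (by omega) (by omega) (by omega)
            rw [he]
            apply ih (t - 2) (by omega) (by omega) (by omega)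
            intro hd
            rw [show t - 2 + 1 = t - 1 by omega] at hd
            have : (4 : ℕ) ∣ (t - 1) := by
              refine dvd_trans ?_ hd
              have : (4 : ℕ) = 2 ^ 2 := by norm_num
              rw [this]; exact pow_dvd_pow 2 (by omega)
            omega
          -- z ((t-1)/2) = 0
          have z2 : z ((t - 1) / 2) = 0 := by
            apply ih ((t - 1) / 2) (by omega) (by omega) (by omega)
            intro hd
            apply hdvd
            rw [show (t - 1) / 2 + 1 = (t + 1) / 2 by omega] at hd
            have h2 : t + 1 = 2 * ((t + 1) / 2) := by omega
            rw [h2, show k + 1 + 2 = (k + 2) + 1 by omega, pow_succ']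
            exact mul_dvd_mul_left 2 hd
          -- z (m - (t+1)/2) = 0
          have hksm : 2 ^ (k + 2) ∣ m := by
            have hle : 2 ^ (k + 2) ≤ t + 1 := Nat.le_of_dvd (by omega) hdk
            have hlt : t + 1 < 2 ^ (s - 1) := by omega
            have : k + 2 ≤ s - 1 := by
              by_contra hc
              push_neg at hc
              have := Nat.pow_le_pow_right (show 1 ≤ 2 by norm_num) (show s - 1 ≤ k + 2 by omega)
              omega
            rw [hmdef]
            exact pow_dvd_pow 2 this
          have z3 : z (m - (t + 1) / 2) = 0 := by
            have he : z (m - (t + 1) / 2) = z (m - (t + 1) / 2 - 1) := by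
              simpa using hev (m - (t + 1) / 2) (by omega) (by omega) (by omega)
            rw [he]
            apply ih (m - (t + 1) / 2 - 1) (by omega) (by omega) (by omega)
            intro hd
            rw [show m - (t + 1) / 2 - 1 + 1 = m - (t + 1) / 2 by omega] at hd
            have hdu : 2 ^ (k + 2) ∣ (t + 1) / 2 := by
              have : (t + 1) / 2 = m - (m - (t + 1) / 2) := by omega
              rw [this]
              exact Nat.dvd_sub hksm hd
            apply hdvd
            have h2 : t + 1 = 2 * ((t + 1) / 2) := by omega
            rw [h2, show k + 1 + 2 = (k + 2) + 1 by omega, pow_succ']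
            exact mul_dvd_mul_left 2 hdu
          exact zm2_four _ _ _ _ E z1 z3 z2
      · exact ih t ht2 ht3 htm hdk
  -- conclude
  intro j hj3 hjm
  rw [show n / 2 - 1 = m - 1 by omega] at hjm
  have hpow : 2 ^ (s - 1) < 2 ^ (s + 2) := Nat.pow_lt_pow_right (by norm_num) (by omega)
  have hnd : ∀ t : ℕ, 3 ≤ t → t ≤ m - 1 → ¬ (2 ^ (s + 2) ∣ (t + 1)) := by
    intro t h1 h2 hd
    have := Nat.le_of_dvd (by omega) hd
    omega
  rcases Nat.even_or_odd j with hje | hjo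
  · have hje2 : j % 2 = 0 := Nat.even_iff.mp hje
    have he : z j = z (j - 1) := hev j (by omega) (by omega) hje2
    rw [he]
    exact H s (j - 1) (by omega) (by omega) (by omega) (hnd (j - 1) (by omega) (by omega))
  · exact H s j (Nat.odd_iff.mp hjo) hj3 hjm (hnd j hj3 hjm)
end
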